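/- arXiv:1012.3127 — 9 statements merged into one kernel-verified Lean document; each statement's English description precedes it below -/
import Mathlib

section
/- For every positive integer m, there exists a family of m distinct finite sets of natural numbers such that every union-free subfamily has size at most ⌊√(4m+1)⌋ − 1. -/
/-- A family of sets is *union-free* if there are no three distinct sets
`X, Y, Z` in the family with `X ∪ Y = Z`. -/
def UnionFree (F : Finset (Finset ℕ)) : Prop :=
  ∀ X ∈ F, ∀ Y ∈ F, ∀ Z ∈ F, X ≠ Y → X ≠ Z → Y ≠ Z → X ∪ Y ≠ Z

/-- The set attached to a grid point `(i,j)`: evens below `2i`, odds below `2j+2`. -/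
def gset (p : ℕ × ℕ) : Finset ℕ :=
  ((Finset.range (p.1 + 1)).image fun x => 2 * x) ∪
    ((Finset.range (p.2 + 1)).image fun x => 2 * x + 1)

lemma mem_gset {x : ℕ} {p : ℕ × ℕ} :
    x ∈ gset p ↔ (∃ y, y ≤ p.1 ∧ 2 * y = x) ∨ (∃ y, y ≤ p.2 ∧ 2 * y + 1 = x) := by
  simp [gset, Nat.lt_succ_iff]

lemma range_union (i j : ℕ) :
    Finset.range i ∪ Finset.range j = Finset.range (max i j) := by
  ext x
  simp only [Finset.mem_union, Finset.mem_range]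
  omega

lemma gset_union (p q : ℕ × ℕ) :
    gset p ∪ gset q = gset (max p.1 q.1, max p.2 q.2) := by
  have h1 : max (p.1 + 1) (q.1 + 1) = max p.1 q.1 + 1 := by omega
  have h2 : max (p.2 + 1) (q.2 + 1) = max p.2 q.2 + 1 := by omega
  unfold gset
  rw [Finset.union_union_union_comm, ← Finset.image_union, ← Finset.image_union,
    range_union, range_union, h1, h2]

lemma gset_inj : Function.Injective gset := by
  have key : ∀ u v : ℕ × ℕ, gset u = gset v → u.1 ≤ v.1 ∧ u.2 ≤ v.2 := by
    intro u v h
    constructor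
    · have h1 : (2 * u.1) ∈ gset u := mem_gset.2 (Or.inl ⟨u.1, le_refl _, rfl⟩)
      rw [h] at h1
      rcases mem_gset.1 h1 with ⟨y, hy, he⟩ | ⟨y, hy, he⟩ <;> omega
    · have h1 : (2 * u.2 + 1) ∈ gset u := mem_gset.2 (Or.inr ⟨u.2, le_refl _, rfl⟩)
      rw [h] at h1
      rcases mem_gset.1 h1 with ⟨y, hy, he⟩ | ⟨y, hy, he⟩ <;> omega
  intro p q h
  have h1 := key p q h
  have h2 := key q p h.symm
  exact Prod.ext_iff.2 ⟨by omega, by omega⟩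

/-- Key combinatorial lemma: a "union-free" (corner-free) set of grid points in
`[0,a) × [0,b)` avoiding the origin has at most `a + b - 2` points. -/
lemma key_count (a b : ℕ) (S : Finset (ℕ × ℕ))
    (hS : ∀ p ∈ S, p.1 < a ∧ p.2 < b) (h00 : ((0, 0) : ℕ × ℕ) ∉ S)
    (hcf : ∀ p ∈ S, ∀ q ∈ S, p.1 < q.1 → q.2 < p.2 → (q.1, p.2) ∉ S) :
    S.card ≤ a + b - 2 := by
  classical
  rcases S.eq_empty_or_nonempty with h | ⟨p₀, hp₀⟩
  · simp [h]
  have ha1 : 1 ≤ a := by have := (hS p₀ hp₀).1; omega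
  have hb1 : 1 ≤ b := by have := (hS p₀ hp₀).2; omega
  -- row-minimality
  set RM : ℕ × ℕ → Prop := fun p => ∀ q ∈ S, q.2 = p.2 → p.1 ≤ q.1 with hRM
  -- corner lemma: not row-min implies col-min
  have colmin : ∀ p ∈ S, ¬ RM p → ∀ q ∈ S, q.1 = p.1 → p.2 ≤ q.2 := by
    intro p hp hnr
    by_contra hc
    push_neg at hc
    obtain ⟨r, hr, hr1, hr2⟩ := hc
    simp only [hRM] at hnr
    push_neg at hnr
    obtain ⟨q, hq, hq2, hq1⟩ := hnr
    have hqr := hcf q hq r hr (by omega) (by omega)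
    have hpe : (r.1, q.2) = p := by
      rw [hr1, hq2]
    exact hqr (hpe ▸ hp)
  set φ : ℕ × ℕ → ℕ := fun p => if RM p then p.2 else b + p.1 with hφ
  -- the main counting step, parametrized by the second missing token
  have count : ∀ m2 : ℕ, m2 ∈ (Finset.range (a + b)).erase b →
      (∀ p ∈ S, φ p ≠ m2) → S.card ≤ a + b - 2 := by
    intro m2 hm2 havoid
    have hmaps : ∀ p ∈ S, φ p ∈ ((Finset.range (a + b)).erase b).erase m2 := by
      intro p hp
      have hpa := (hS p hp).1
      have hpb := (hS p hp).2
      have h1 : φ p ≠ b := by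
        rw [hφ]
        simp only
        split_ifs with h
        · omega
        · intro he
          simp only [hRM] at h
          push_neg at h
          obtain ⟨q, hq, _, hlt⟩ := h
          omega
      have h2 : φ p < a + b := by
        rw [hφ]
        simp only
        split_ifs <;> omega
      exact Finset.mem_erase.2 ⟨havoid p hp, Finset.mem_erase.2 ⟨h1, Finset.mem_range.2 h2⟩⟩
    have hinj : Set.InjOn φ S := by
      rintro p hp q hq he
      simp only [Set.mem_setOf_eq, Finset.mem_coe] at hp hq
      have hpa := (hS p hp).1
      have hpb := (hS p hp).2
      have hqa := (hS q hq).1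
      have hqb := (hS q hq).2
      rw [hφ] at he
      simp only at he
      split_ifs at he with h1 h2 h2
      · -- both row-min
        have e2 : p.2 = q.2 := he
        have l1 : p.1 ≤ q.1 := h1 q hq e2.symm
        have l2 : q.1 ≤ p.1 := h2 p hp e2
        exact Prod.ext_iff.2 ⟨by omega, e2⟩
      · omega
      · omega
      · -- both col-min
        have e1 : p.1 = q.1 := by omega
        have l1 : p.2 ≤ q.2 := colmin p hp h1 q hq e1.symm
        have l2 : q.2 ≤ p.2 := colmin q hq h2 p hp e1
        exact Prod.ext_iff.2 ⟨e1, by omega⟩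
    have hle := Finset.card_le_card_of_injOn φ hmaps hinj
    have hbmem : b ∈ Finset.range (a + b) := Finset.mem_range.2 (by omega)
    rw [Finset.card_erase_of_mem hm2, Finset.card_erase_of_mem hbmem,
      Finset.card_range] at hle
    omega
  -- choose the second missing token
  by_cases hRne : (S.filter fun p => p.2 = 0).Nonempty
  · -- row 0 is nonempty; let i1 be the least first coordinate in row 0
    set R := S.filter fun p => p.2 = 0 with hRdef
    have hRim : (R.image Prod.fst).Nonempty := hRne.image _
    set i1 := (R.image Prod.fst).min' hRim with hi1
    have hq0 : (i1, 0) ∈ S := by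
      have hmem := Finset.min'_mem (R.image Prod.fst) hRim
      rw [Finset.mem_image] at hmem
      obtain ⟨p, hp, hp1⟩ := hmem
      rw [hRdef, Finset.mem_filter] at hp
      have : (i1, 0) = p := Prod.ext_iff.2 ⟨hp1.symm, hp.2.symm⟩
      rw [this]
      exact hp.1
    have hi1min : ∀ q ∈ S, q.2 = 0 → i1 ≤ q.1 := by
      intro q hq h2
      exact Finset.min'_le _ _ (Finset.mem_image_of_mem _
        (Finset.mem_filter.2 ⟨hq, h2⟩))
    have hi1pos : 1 ≤ i1 := by
      by_contra hc
      push_neg at hc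
      have : i1 = 0 := by omega
      rw [this] at hq0
      exact h00 hq0
    have hi1a : i1 < a := (hS _ hq0).1
    apply count (b + i1)
    · exact Finset.mem_erase.2 ⟨by omega, Finset.mem_range.2 (by omega)⟩
    · intro p hp
      have hpb := (hS p hp).2
      rw [hφ]
      simp only
      split_ifs with h
      · omega
      · intro he
        have hp1 : p.1 = i1 := by omega
        have hcm := colmin p hp h (i1, 0) hq0 (by rw [hp1])
        have hp2 : p.2 = 0 := by omega
        simp only [hRM] at h
        push_neg at h
        obtain ⟨q, hq, hq2, hq1⟩ := h
        have := hi1min q hq (by omega)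
        omega
  · -- row 0 is empty; the token 0 is unused
    apply count 0
    · exact Finset.mem_erase.2 ⟨by omega, Finset.mem_range.2 (by omega)⟩
    · intro p hp
      rw [hφ]
      simp only
      split_ifs with h
      · intro he
        exact hRne ⟨p, Finset.mem_filter.2 ⟨hp, he⟩⟩
      · omega

/-- For every positive integer `m` there exists a family of `m` distinct finite sets
of natural numbers in which every union-free subfamily has size at most
`⌊√(4m+1)⌋ - 1`. -/
theorem exists_family_small_unionFree (m : ℕ) (hm : 0 < m) :
    ∃ F : Finset (Finset ℕ), F.card = m ∧
      ∀ G ⊆ F, UnionFree G → G.card ≤ Nat.sqrt (4 * m + 1) - 1 := by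
  classical
  obtain ⟨s, hs⟩ : ∃ s, Nat.sqrt (4 * m + 1) = s := ⟨_, rfl⟩
  set a := (s + 1) / 2 with ha
  set b := (s + 2) / 2 with hb
  have hsqlt : 4 * m + 1 < (s + 1) * (s + 1) := by
    rw [← hs]
    exact Nat.lt_succ_sqrt (4 * m + 1)
  have hs2 : 2 ≤ s := by
    rw [← hs]
    exact Nat.le_sqrt.2 (by omega)
  have hab : a + b = s + 1 := by omega
  have habm : m + 1 ≤ a * b := by
    have h4 : (s + 1) * (s + 1) ≤ 4 * (a * b) + 1 := by
      rcases (by omega : b = a ∧ s + 1 = 2 * a ∨ b = a + 1 ∧ s + 1 = 2 * a + 1) with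
        ⟨h1, h2⟩ | ⟨h1, h2⟩
      · have : (s + 1) * (s + 1) = 4 * (a * b) := by rw [h2, h1]; ring
        omega
      · have : (s + 1) * (s + 1) = 4 * (a * b) + 1 := by rw [h2, h1]; ring
        omega
    have h5 : 4 * m + 1 < 4 * (a * b) + 1 := lt_of_lt_of_le hsqlt h4
    generalize a * b = P at h5 ⊢
    omega
  have ha1 : 1 ≤ a := by omega
  have hb1 : 1 ≤ b := by omega
  set grid := (Finset.range a ×ˢ Finset.range b).erase ((0, 0) : ℕ × ℕ) with hgrid
  have h00grid : ((0, 0) : ℕ × ℕ) ∈ Finset.range a ×ˢ Finset.range b :=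
    Finset.mem_product.2 ⟨Finset.mem_range.2 (by omega), Finset.mem_range.2 (by omega)⟩
  have hgcard : grid.card = a * b - 1 := by
    rw [hgrid, Finset.card_erase_of_mem h00grid, Finset.card_product,
      Finset.card_range, Finset.card_range]
  have hmgrid : m ≤ grid.card := by
    rw [hgcard]
    generalize a * b = P at habm ⊢
    omega
  obtain ⟨T, hTsub, hTcard⟩ := Finset.exists_subset_card_eq hmgrid
  refine ⟨T.image gset, ?_, ?_⟩
  · rw [Finset.card_image_of_injective _ gset_inj, hTcard]
  · intro G hG hUF
    set S := T.filter (fun p => gset p ∈ G) with hSdef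
    have hGS : G = S.image gset := by
      apply Finset.Subset.antisymm
      · intro X hX
        obtain ⟨p, hp, rfl⟩ := Finset.mem_image.1 (hG hX)
        exact Finset.mem_image_of_mem _ (Finset.mem_filter.2 ⟨hp, hX⟩)
      · intro X hX
        obtain ⟨p, hp, rfl⟩ := Finset.mem_image.1 hX
        exact (Finset.mem_filter.1 hp).2
    have hcard : G.card = S.card := by
      rw [hGS, Finset.card_image_of_injective _ gset_inj]
    have hSgrid : ∀ p ∈ S, p ∈ grid := fun p hp => hTsub (Finset.mem_filter.1 hp).1
    have h1 : ∀ p ∈ S, p.1 < a ∧ p.2 < b := by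
      intro p hp
      have := hSgrid p hp
      rw [hgrid, Finset.mem_erase, Finset.mem_product, Finset.mem_range,
        Finset.mem_range] at this
      exact this.2
    have h00 : ((0, 0) : ℕ × ℕ) ∉ S := fun h => (Finset.mem_erase.1 (hSgrid _ h)).1 rfl
    have hcf : ∀ p ∈ S, ∀ q ∈ S, p.1 < q.1 → q.2 < p.2 → (q.1, p.2) ∉ S := by
      intro p hp q hq hlt1 hlt2 hr
      have hXG : gset p ∈ G := (Finset.mem_filter.1 hp).2
      have hYG : gset q ∈ G := (Finset.mem_filter.1 hq).2
      have hZG : gset (q.1, p.2) ∈ G := (Finset.mem_filter.1 hr).2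
      have hunion : gset p ∪ gset q = gset (q.1, p.2) := by
        rw [gset_union, max_eq_right (le_of_lt hlt1), max_eq_left (le_of_lt hlt2)]
      refine hUF _ hXG _ hYG _ hZG ?_ ?_ ?_ hunion
      · intro he
        have h := gset_inj he
        rw [h] at hlt1
        exact lt_irrefl _ hlt1
      · intro he
        have h := congrArg Prod.fst (gset_inj he)
        simp only at h
        omega
      · intro he
        have h := congrArg Prod.snd (gset_inj he)
        simp only at h
        omega
    have hkey := key_count a b S h1 h00 hcf
    omega
end

section
/- Let 𝓕 be a finite family of distinct sets with levels 𝓕₁, …, 𝓕_t as defined, let i < i' be indices, and let X, Y ∈ 𝓕 be sets of rank at most i with X ∪ Y ∈ 𝓕_{i'}. Then there exist two disjoint chains 𝓧 and 𝓨 in 𝓕, each consisting of exactly one set of each rank j for i ≤ j ≤ i'−1, such that at most one set in {X' ∪ Y' : X' ∈ 𝓧, Y' ∈ 𝓨} has rank i' and every other set of this form either has rank greater than i' or does not belong to 𝓕. -/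
open scoped Classical in
/-- The maximal (by inclusion) sets of a family. -/
noncomputable def maxSets (G : Finset (Finset ℕ)) : Finset (Finset ℕ) :=
  G.filter fun X => ∀ Y ∈ G, ¬ X ⊂ Y

/-- `rem F k` is what remains of the family `F` after `k` rounds of peeling off
the maximal sets. -/
noncomputable def rem (F : Finset (Finset ℕ)) : ℕ → Finset (Finset ℕ)
  | 0 => F
  | k + 1 => rem F k \ maxSets (rem F k)

open scoped Classical in
/-- The length `t` of the longest chain (under inclusion) in the family `F`. -/
noncomputable def famHeight (F : Finset (Finset ℕ)) : ℕ :=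
  (Finset.filter (fun C : Finset (Finset ℕ) => IsChain (· ⊆ ·) (C : Set (Finset ℕ))) F.powerset).sup Finset.card

/-- The `i`-th level `𝓕ᵢ` of the family `F`: with `t = famHeight F`,
`𝓕_t` is the family of maximal sets of `F` and, downwards, `𝓕ᵢ` is the family of
maximal sets of `F \ (𝓕_{i+1} ∪ ⋯ ∪ 𝓕_t)`.  A set has *rank* `i` if it lies in
`level F i`. -/
noncomputable def level (F : Finset (Finset ℕ)) (i : ℕ) : Finset (Finset ℕ) :=
  maxSets (rem F (famHeight F - i))

/-- The auxiliary graph `H = H(F)` on the vertex set `{1, …, t}`, `t = famHeight F`: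
the pair `(i, i')` with `i < i'` is an edge if there exist two disjoint chains
`X` and `Y`, each consisting of exactly one set of each rank `j` for `i ≤ j ≤ i' - 1`,
such that at most one set in `{X j ∪ Y k}` has rank `i'` and every other set of this
form has rank greater than `i'` or does not belong to `F`. -/
def HEdge (F : Finset (Finset ℕ)) (i i' : ℕ) : Prop :=
  1 ≤ i ∧ i < i' ∧ i' ≤ famHeight F ∧
  ∃ X Y : ℕ → Finset ℕ,
    (∀ j, i ≤ j → j < i' → X j ∈ level F j) ∧
    (∀ j, i ≤ j → j < i' → Y j ∈ level F j) ∧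
    (∀ j k, i ≤ j → j < k → k < i' → X j ⊂ X k) ∧
    (∀ j k, i ≤ j → j < k → k < i' → Y j ⊂ Y k) ∧
    (∀ j k, i ≤ j → j < i' → i ≤ k → k < i' → X j ≠ Y k) ∧
    (∀ j k, i ≤ j → j < i' → i ≤ k → k < i' →
      X j ∪ Y k ∉ F ∨ X j ∪ Y k ∈ level F i' ∨
        ∃ r, i' < r ∧ r ≤ famHeight F ∧ X j ∪ Y k ∈ level F r) ∧
    (∀ j₁ k₁ j₂ k₂, i ≤ j₁ → j₁ < i' → i ≤ k₁ → k₁ < i' →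
      i ≤ j₂ → j₂ < i' → i ≤ k₂ → k₂ < i' →
      X j₁ ∪ Y k₁ ∈ level F i' → X j₂ ∪ Y k₂ ∈ level F i' →
      X j₁ ∪ Y k₁ = X j₂ ∪ Y k₂)

/-!
A set of rank `j < t` lies strictly inside some set of rank `j + 1`: it was not maximal when it was
peeled off. Climbing in this way from `X` and from `Y` up to rank `i' - 1` gives the two chains, and
every union `X' ∪ Y'` contains `W = X ∪ Y`. As `W` is maximal among the sets of rank at most `i'`, a
set of `F` containing `W` is `W` itself or has rank greater than `i'`; in particular no set of rank
below `i'` contains `W`, which makes the chains disjoint.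
-/

open Finset

section Peeling

variable {F G : Finset (Finset ℕ)} {A W Z : Finset ℕ}

theorem mem_maxSets : A ∈ maxSets G ↔ A ∈ G ∧ ∀ B ∈ G, ¬ A ⊂ B := by
  simp [maxSets]

theorem maxSets_subset (G : Finset (Finset ℕ)) : maxSets G ⊆ G :=
  filter_subset _ _

theorem mem_maxSets_iff_maximal : A ∈ maxSets G ↔ Maximal (· ∈ G) A := by
  rw [mem_maxSets, maximal_iff_forall_gt]
  exact and_congr_right fun _ => ⟨fun h B hAB hB => h B hB hAB, fun h B hB hAB => h hAB hB⟩

theorem exists_mem_maxSets_superset (hA : A ∈ G) : ∃ B ∈ maxSets G, A ⊆ B := by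
  obtain ⟨B, hAB, hB⟩ := G.exists_le_maximal hA
  exact ⟨B, mem_maxSets_iff_maximal.2 hB, hAB⟩

theorem eq_of_mem_maxSets_of_subset (hW : W ∈ maxSets G) (hA : A ∈ G) (hWA : W ⊆ A) : W = A :=
  of_not_not fun hne => (mem_maxSets.1 hW).2 A hA (ssubset_of_subset_of_ne hWA hne)

theorem rem_succ_subset (F : Finset (Finset ℕ)) (n : ℕ) : rem F (n + 1) ⊆ rem F n :=
  sdiff_subset

theorem rem_antitone (F : Finset (Finset ℕ)) : Antitone (rem F) :=
  antitone_nat_of_succ_le (rem_succ_subset F)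

theorem rem_succ_ssubset {n : ℕ} (h : (rem F n).Nonempty) : rem F (n + 1) ⊂ rem F n := by
  obtain ⟨A, hA⟩ := h
  obtain ⟨B, hB, -⟩ := exists_mem_maxSets_superset hA
  exact sdiff_ssubset (maxSets_subset _) ⟨B, hB⟩

theorem card_rem_add_le (n : ℕ) (h : (rem F n).Nonempty) : #(rem F n) + n ≤ #F := by
  induction n with
  | zero => simp [rem]
  | succ n ih =>
    have hne := h.mono (rem_succ_subset F n)
    have := card_lt_card (rem_succ_ssubset hne)
    have := ih hne
    omega

theorem exists_mem_maxSets_rem (hZ : Z ∈ F) : ∃ n, Z ∈ maxSets (rem F n) := by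
  by_contra! h
  have hmem : ∀ n, Z ∈ rem F n := by
    intro n
    induction n with
    | zero => exact hZ
    | succ n ih => exact mem_sdiff.2 ⟨ih, h n⟩
  have := card_rem_add_le (#F + 1) ⟨Z, hmem _⟩
  have := card_pos.2 ⟨Z, hmem (#F + 1)⟩
  omega

theorem exists_ssubset_mem_maxSets_of_mem_rem_succ {n : ℕ} (hA : A ∈ rem F (n + 1)) :
    ∃ B ∈ maxSets (rem F n), A ⊂ B := by
  obtain ⟨hAn, hAmax⟩ := mem_sdiff.1 hA
  obtain ⟨C, hC, hAC⟩ : ∃ C ∈ rem F n, A ⊂ C := by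
    by_contra! h
    exact hAmax (mem_maxSets.2 ⟨hAn, h⟩)
  obtain ⟨B, hB, hCB⟩ := exists_mem_maxSets_superset hC
  exact ⟨B, hB, hAC.trans_subset hCB⟩

theorem exists_strictAntiOn_mem_maxSets_rem {n : ℕ} (hA : A ∈ maxSets (rem F n)) :
    ∃ f : ℕ → Finset ℕ, f n = A ∧ (∀ m ≤ n, f m ∈ maxSets (rem F m)) ∧
      StrictAntiOn f (Set.Iic n) := by
  induction n generalizing A with
  | zero =>
    refine ⟨fun _ => A, rfl, fun m hm => by rwa [Nat.le_zero.1 hm], fun a ha b hb hab => ?_⟩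
    simp_all
  | succ n ih =>
    obtain ⟨B, hB, hAB⟩ := exists_ssubset_mem_maxSets_of_mem_rem_succ (maxSets_subset _ hA)
    obtain ⟨g, hgn, hg, hg_anti⟩ := ih hB
    refine ⟨Function.update g (n + 1) A, by simp, fun m hm => ?_, fun a ha b hb hab => ?_⟩
    · rcases hm.eq_or_lt with rfl | hm
      · simpa
      · rw [Function.update_of_ne (by omega)]
        exact hg m (by omega)
    · simp only [Set.mem_Iic] at ha hb
      rw [Function.update_of_ne (by omega : a ≠ n + 1)]
      rcases hb.eq_or_lt with rfl | hb
      · rw [Function.update_self]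
        exact hAB.trans_le (hgn ▸ hg_anti.antitoneOn (Set.mem_Iic.2 (by omega))
          (Set.mem_Iic.2 le_rfl) (by omega))
      · rw [Function.update_of_ne (by omega)]
        exact hg_anti (Set.mem_Iic.2 (by omega)) (Set.mem_Iic.2 (by omega)) hab

end Peeling

section Levels

variable {F : Finset (Finset ℕ)} {A W Z : Finset ℕ}

theorem level_famHeight_sub {m : ℕ} (hm : m ≤ famHeight F) :
    level F (famHeight F - m) = maxSets (rem F m) := by
  rw [level, Nat.sub_sub_self hm]

theorem exists_chain_level {j k : ℕ} (hZ : Z ∈ level F j) (hk : k ≤ famHeight F) :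
    ∃ C : ℕ → Finset ℕ, (∀ l, j ≤ l → l ≤ k → C l ∈ level F l ∧ Z ⊆ C l) ∧
      StrictMonoOn C (Set.Icc j k) := by
  obtain ⟨f, hfZ, hf, hf_anti⟩ := exists_strictAntiOn_mem_maxSets_rem hZ
  refine ⟨fun l => f (famHeight F - l), fun l hjl hlk => ⟨hf _ (by omega), ?_⟩,
    fun a ha b hb hab => ?_⟩
  · exact hfZ ▸ hf_anti.antitoneOn (Set.mem_Iic.2 (by omega)) (Set.mem_Iic.2 le_rfl) (by omega)
  · exact hf_anti (Set.mem_Iic.2 (by grind)) (Set.mem_Iic.2 (by grind)) (by grind)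

theorem not_subset_of_mem_level_of_lt {l r : ℕ} (hW : W ∈ level F r) (hA : A ∈ level F l)
    (hlr : l < r) (hr : r ≤ famHeight F) : ¬ W ⊆ A := by
  intro hWA
  have hA' : A ∈ rem F (famHeight F - r + 1) :=
    rem_antitone F (by omega) (maxSets_subset _ hA)
  have hWr : W ∉ rem F (famHeight F - r + 1) := fun h => (mem_sdiff.1 h).2 hW
  exact hWr (eq_of_mem_maxSets_of_subset hW (rem_succ_subset F _ hA') hWA ▸ hA')

theorem exists_level_gt_of_ssubset {r : ℕ} (hW : W ∈ level F r) (hA : A ∈ F) (hWA : W ⊂ A) :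
    ∃ r', r < r' ∧ r' ≤ famHeight F ∧ A ∈ level F r' := by
  obtain ⟨m, hm⟩ := exists_mem_maxSets_rem hA
  have hmr : m < famHeight F - r := by
    by_contra! hle
    exact (mem_maxSets.1 hW).2 A (rem_antitone F hle (maxSets_subset _ hm)) hWA
  exact ⟨famHeight F - m, by omega, by omega, by rwa [level_famHeight_sub (by omega)]⟩

end Levels

theorem union_implies_edge_general (F : Finset (Finset ℕ)) (i i' : ℕ)
    (h1 : 1 ≤ i) (hii' : i < i') (hi't : i' ≤ famHeight F)
    (X Y : Finset ℕ)
    (hrX : ∃ j, 1 ≤ j ∧ j ≤ i ∧ X ∈ level F j)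
    (hrY : ∃ j, 1 ≤ j ∧ j ≤ i ∧ Y ∈ level F j)
    (hXY : X ∪ Y ∈ level F i') :
    HEdge F i i' := by
  obtain ⟨jX, -, hjX, hXj⟩ := hrX
  obtain ⟨jY, -, hjY, hYj⟩ := hrY
  obtain ⟨C, hC, hC_mono⟩ := exists_chain_level hXj (k := i' - 1) (by omega)
  obtain ⟨D, hD, hD_mono⟩ := exists_chain_level hYj (k := i' - 1) (by omega)
  have hsub : ∀ j k, i ≤ j → j < i' → i ≤ k → k < i' → X ∪ Y ⊆ C j ∪ D k :=
    fun j k _ _ _ _ =>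
      union_subset_union (hC j (by omega) (by omega)).2 (hD k (by omega) (by omega)).2
  refine ⟨h1, hii', hi't, C, D, fun j _ _ => (hC j (by omega) (by omega)).1,
    fun j _ _ => (hD j (by omega) (by omega)).1,
    fun j k _ _ _ => hC_mono ⟨by omega, by omega⟩ ⟨by omega, by omega⟩ ‹_›,
    fun j k _ _ _ => hD_mono ⟨by omega, by omega⟩ ⟨by omega, by omega⟩ ‹_›,
    fun j k _ _ _ _ hCD => ?_, fun j k _ _ _ _ => ?_,
    fun j₁ k₁ j₂ k₂ _ _ _ _ _ _ _ _ h₁ h₂ => ?_⟩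
  · refine not_subset_of_mem_level_of_lt hXY (hC j (by omega) (by omega)).1 ‹_› hi't ?_
    simpa [hCD] using hsub j k ‹_› ‹_› ‹_› ‹_›
  · by_cases hF : C j ∪ D k ∈ F
    · rcases (hsub j k ‹_› ‹_› ‹_› ‹_›).eq_or_ssubset with h | h
      · exact .inr (.inl (h ▸ hXY))
      · exact .inr (.inr (exists_level_gt_of_ssubset hXY hF h))
    · exact .inl hF
  · rw [← eq_of_mem_maxSets_of_subset hXY (maxSets_subset _ h₁) (hsub j₁ k₁ ‹_› ‹_› ‹_› ‹_›)]
    exact eq_of_mem_maxSets_of_subset hXY (maxSets_subset _ h₂) (hsub j₂ k₂ ‹_› ‹_› ‹_› ‹_›)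

/-- Lemma 1: if `X, Y` are two sets of rank at most `i` whose union lies in level `i'`
(where `i < i'`), then `(i, i')` is an edge of `H`, i.e. there exist two disjoint
chains `𝓧, 𝓨`, each consisting of exactly one set of each rank `j` for
`i ≤ j ≤ i' - 1`, such that at most one set in `{X' ∪ Y' : X' ∈ 𝓧, Y' ∈ 𝓨}` has
rank `i'` and every other set of this form has rank greater than `i'` or does not
belong to `F`. -/
theorem union_implies_edge (F : Finset (Finset ℕ)) (i i' : ℕ)
    (h1 : 1 ≤ i) (hii' : i < i') (hi't : i' ≤ famHeight F)
    (X Y : Finset ℕ) (hX : X ∈ F) (hY : Y ∈ F)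
    (hrX : ∃ j, 1 ≤ j ∧ j ≤ i ∧ X ∈ level F j)
    (hrY : ∃ j, 1 ≤ j ∧ j ≤ i ∧ Y ∈ level F j)
    (hXY : X ∪ Y ∈ level F i') :
    HEdge F i i' :=
  union_implies_edge_general F i i' h1 hii' hi't X Y hrX hrY hXY
end

section
/- Let 𝓕 be a finite family of distinct sets with auxiliary graph H on vertex set {1, …, t}. If (i, i') is an edge of H and i < i'' < i', then both (i, i'') and (i'', i') are edges of H. -/
lemma rem_mono (F : Finset (Finset ℕ)) {m n : ℕ} (h : m ≤ n) : rem F n ⊆ rem F m := by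
  induction n with
  | zero => simp_all [Nat.le_zero.mp h]
  | succ n ih =>
    rcases Nat.eq_or_lt_of_le h with rfl | h'
    · exact subset_rfl
    · exact Finset.Subset.trans Finset.sdiff_subset (ih (Nat.lt_succ_iff.mp h'))

lemma level_subset (F : Finset (Finset ℕ)) (a : ℕ) : level F a ⊆ F := by
  intro x hx
  have h1 : x ∈ rem F (famHeight F - a) := Finset.filter_subset _ _ hx
  exact rem_mono F (Nat.zero_le _) h1

lemma level_disjoint (F : Finset (Finset ℕ)) {a b : ℕ} {Z : Finset ℕ}
    (hab : a < b) (hb : b ≤ famHeight F) (hZ : Z ∈ level F b) : Z ∉ level F a := by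
  intro hZa
  have h1 : Z ∈ rem F (famHeight F - a) := Finset.filter_subset _ _ hZa
  have h2 : Z ∈ rem F (famHeight F - b + 1) :=
    rem_mono F (by omega) h1
  rw [rem, Finset.mem_sdiff] at h2
  exact h2.2 hZ

/-- Monotonicity of the auxiliary graph `H`: if `(i, i')` is an edge of `H` and
`i < i'' < i'`, then `(i, i'')` and `(i'', i')` are also edges of `H`. -/
theorem hEdge_monotone (F : Finset (Finset ℕ)) (i i'' i' : ℕ)
    (h : HEdge F i i') (h₁ : i < i'') (h₂ : i'' < i') :
    HEdge F i i'' ∧ HEdge F i'' i' := by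
  obtain ⟨hi1, hlt, hle, X, Y, hX, hY, hXc, hYc, hne, hrank, huniq⟩ := h
  constructor
  · refine ⟨hi1, h₁, by omega, X, Y,
      fun j hj hj' => hX j hj (by omega),
      fun j hj hj' => hY j hj (by omega),
      fun j k hj hjk hk => hXc j k hj hjk (by omega),
      fun j k hj hjk hk => hYc j k hj hjk (by omega),
      fun j k hj hj' hk hk' => hne j k hj (by omega) hk (by omega),
      ?_, ?_⟩
    · intro j k hj hj' hk hk'
      rcases hrank j k hj (by omega) hk (by omega) with hc | hc | ⟨r, hr1, hr2, hr3⟩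
      · exact Or.inl hc
      · exact Or.inr (Or.inr ⟨i', h₂, hle, hc⟩)
      · exact Or.inr (Or.inr ⟨r, by omega, hr2, hr3⟩)
    · intro j₁ k₁ j₂ k₂ hj₁ hj₁' hk₁ hk₁' hj₂ hj₂' hk₂ hk₂' hm₁ hm₂
      exfalso
      rcases hrank j₁ k₁ hj₁ (by omega) hk₁ (by omega) with hc | hc | ⟨r, hr1, hr2, hr3⟩
      · exact hc (level_subset F i'' hm₁)
      · exact level_disjoint F h₂ hle hc hm₁
      · exact level_disjoint F (by omega : i'' < r) hr2 hr3 hm₁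
  · exact ⟨by omega, h₂, hle, X, Y,
      fun j hj hj' => hX j (by omega) hj',
      fun j hj hj' => hY j (by omega) hj',
      fun j k hj hjk hk => hXc j k (by omega) hjk hk,
      fun j k hj hjk hk => hYc j k (by omega) hjk hk,
      fun j k hj hj' hk hk' => hne j k (by omega) hj' (by omega) hk',
      fun j k hj hj' hk hk' => hrank j k (by omega) hj' (by omega) hk',
      fun j₁ k₁ j₂ k₂ hj₁ hj₁' hk₁ hk₁' hj₂ hj₂' hk₂ hk₂' =>
        huniq j₁ k₁ j₂ k₂ (by omega) hj₁' (by omega) hk₁' (by omega) hj₂' (by omega) hk₂'⟩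
end

section
/- Let a ≥ 2 be an integer and let 𝓕 be a family of distinct sets, partially ordered by inclusion. If 𝓕 contains an (ℓ,α)-ladder, then 𝓕 contains an a-union-free subfamily of size at least ℓ·max{α, 1}. -/
/-- A family of sets is *`a`-union-free* if there are no `a+1` distinct sets
`X₁, …, X_{a+1}` in the family with `X₁ ∪ ⋯ ∪ X_a = X_{a+1}`. -/
def AUnionFree (a : ℕ) (F : Finset (Finset ℕ)) : Prop :=
  ∀ X : Fin (a + 1) → Finset ℕ, Function.Injective X → (∀ i, X i ∈ F) →
    Finset.univ.sup (fun i : Fin a => X i.castSucc) ≠ X (Fin.last a)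

/-- `S` contains an `(l, α)`-ladder: a chain `X 0 ⊂ X 1 ⊂ ⋯ ⊂ X (l-1)` together
with `l` antichains `Y 0, …, Y (l-1)`, each of size `α`, such that every member of
`Y i` is contained in `X i`, and no member of `Y (i+1)` is contained in `X i`. -/
def HasLadderIn (S : Set (Finset ℕ)) (l α : ℕ) : Prop :=
  ∃ (X : ℕ → Finset ℕ) (Y : ℕ → Finset (Finset ℕ)),
    (∀ i, i < l → X i ∈ S) ∧
    (∀ i j, i < j → j < l → X i ⊂ X j) ∧
    (∀ i, i < l → ↑(Y i) ⊆ S) ∧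
    (∀ i, i < l → (Y i).card = α) ∧
    (∀ i, i < l → IsAntichain (· ⊆ ·) (↑(Y i) : Set (Finset ℕ))) ∧
    (∀ i, i < l → ∀ Z ∈ Y i, Z ⊆ X i) ∧
    (∀ i, i + 1 < l → ∀ Z ∈ Y (i + 1), ¬ Z ⊆ X i)

/-!
Union-freeness comes from the levels of the ladder: a member of the `i`-th rung lies in `X j`
exactly when `i ≤ j`. If `Z₁ ∪ ⋯ ∪ Z_a = Z` with all sets distinct and `Z` in rung `k`, each `Zⱼ`
is a proper subset of `Z`, hence (the rungs being antichains) sits in a rung below `k`, hence lies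
in `X (k - 1)`; then so does `Z`, which is impossible. The rungs are disjoint for the same reason,
so their union has `l α` members. A bare chain `(X i)` is the ladder with singleton rungs `{X i}`,
which handles `α = 0`.
-/

open Finset

structure IsLadder (S : Set (Finset ℕ)) (l α : ℕ) (X : ℕ → Finset ℕ)
    (Y : ℕ → Finset (Finset ℕ)) : Prop where
  chain_mem : ∀ i, i < l → X i ∈ S
  chain_ssubset : ∀ i j, i < j → j < l → X i ⊂ X j
  rung_subset : ∀ i, i < l → ↑(Y i) ⊆ S
  card_rung : ∀ i, i < l → (Y i).card = α
  isAntichain_rung : ∀ i, i < l → IsAntichain (· ⊆ ·) (↑(Y i) : Set (Finset ℕ))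
  subset_chain : ∀ i, i < l → ∀ Z ∈ Y i, Z ⊆ X i
  not_subset_chain_pred : ∀ i, i + 1 < l → ∀ Z ∈ Y (i + 1), ¬ Z ⊆ X i

namespace IsLadder

variable {S : Set (Finset ℕ)} {l α : ℕ} {X : ℕ → Finset ℕ} {Y : ℕ → Finset (Finset ℕ)}

theorem singletons (hL : IsLadder S l α X Y) : IsLadder S l 1 X fun i => {X i} where
  chain_mem := hL.chain_mem
  chain_ssubset := hL.chain_ssubset
  rung_subset i hi := by simpa using hL.chain_mem i hi
  card_rung _ _ := card_singleton _
  isAntichain_rung _ _ := by simp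
  subset_chain _ _ Z hZ := (mem_singleton.mp hZ).le
  not_subset_chain_pred i hi Z hZ := by
    rw [mem_singleton.mp hZ]
    exact (hL.chain_ssubset i (i + 1) i.lt_succ_self hi).not_subset

theorem chain_mono (hL : IsLadder S l α X Y) {i j : ℕ} (hij : i ≤ j) (hj : j < l) :
    X i ⊆ X j := by
  rcases hij.eq_or_lt with rfl | hij
  · exact subset_rfl
  · exact (hL.chain_ssubset i j hij hj).subset

theorem subset_chain_iff (hL : IsLadder S l α X Y) {i j : ℕ} (hi : i < l) (hj : j < l)
    {Z : Finset ℕ} (hZ : Z ∈ Y i) : Z ⊆ X j ↔ i ≤ j := by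
  refine ⟨fun hZX => ?_, fun hij => (hL.subset_chain i hi Z hZ).trans (hL.chain_mono hij hj)⟩
  by_contra! hji
  obtain ⟨i, rfl⟩ : ∃ i', i = i' + 1 := ⟨i - 1, by omega⟩
  exact hL.not_subset_chain_pred i hi Z hZ (hZX.trans (hL.chain_mono (by omega) (by omega)))

theorem lt_of_ssubset (hL : IsLadder S l α X Y) {i k : ℕ} (hi : i < l) (hk : k < l)
    {W Z : Finset ℕ} (hW : W ∈ Y i) (hZ : Z ∈ Y k) (hWZ : W ⊂ Z) : i < k := by
  have hik : i ≤ k :=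
    (hL.subset_chain_iff hi hk hW).mp (hWZ.subset.trans (hL.subset_chain k hk Z hZ))
  refine hik.lt_of_ne fun hik => ?_
  subst hik
  exact hL.isAntichain_rung i hi hW hZ hWZ.ne hWZ.subset

theorem pairwiseDisjoint (hL : IsLadder S l α X Y) :
    (↑(range l) : Set ℕ).PairwiseDisjoint Y := by
  intro i hi j hj hij
  simp only [coe_range, Set.mem_Iio] at hi hj
  refine disjoint_left.mpr fun Z hZi hZj => hij (le_antisymm ?_ ?_)
  · exact (hL.subset_chain_iff hi hj hZi).mp (hL.subset_chain j hj Z hZj)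
  · exact (hL.subset_chain_iff hj hi hZj).mp (hL.subset_chain i hi Z hZi)

theorem card_biUnion (hL : IsLadder S l α X Y) : ((range l).biUnion Y).card = l * α := by
  rw [Finset.card_biUnion hL.pairwiseDisjoint,
    sum_congr rfl fun i hi => hL.card_rung i (mem_range.mp hi), sum_const, card_range,
    smul_eq_mul]

theorem coe_biUnion_subset (hL : IsLadder S l α X Y) : ↑((range l).biUnion Y) ⊆ S := by
  intro Z hZ
  obtain ⟨i, hi, hZi⟩ := mem_biUnion.mp hZ
  exact hL.rung_subset i (mem_range.mp hi) hZi

theorem aUnionFree_biUnion (hL : IsLadder S l α X Y) {a : ℕ} (ha : 1 ≤ a) :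
    AUnionFree a ((range l).biUnion Y) := by
  intro Z hZinj hZmem hsup
  choose m hml hmY using fun j => (by simpa using hZmem j : ∃ i < l, Z j ∈ Y i)
  set k := m (Fin.last a)
  have hlt : ∀ j : Fin a, m j.castSucc < k := fun j =>
    hL.lt_of_ssubset (hml _) (hml _) (hmY _) (hmY _) <| ssubset_of_subset_of_ne
      (hsup ▸ le_sup (f := fun j : Fin a => Z j.castSucc) (mem_univ j))
      fun h => (Fin.castSucc_lt_last j).ne (hZinj h)
  have hk : 1 ≤ k := Nat.one_le_of_lt (hlt ⟨0, ha⟩)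
  have hkl : k < l := hml _
  have hZX : Z (Fin.last a) ⊆ X (k - 1) := by
    rw [← hsup]
    refine Finset.sup_le fun j _ => (hL.subset_chain_iff (hml _) (by omega) (hmY _)).mpr ?_
    have := hlt j
    omega
  have := (hL.subset_chain_iff (hml _) (by omega) (hmY _)).mp hZX
  omega

end IsLadder

theorem HasLadderIn.exists_isLadder_max_one {S : Set (Finset ℕ)} {l α : ℕ}
    (h : HasLadderIn S l α) : ∃ X Y, IsLadder S l (max α 1) X Y := by
  obtain ⟨X, Y, h₁, h₂, h₃, h₄, h₅, h₆, h₇⟩ := h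
  have hL : IsLadder S l α X Y := ⟨h₁, h₂, h₃, h₄, h₅, h₆, h₇⟩
  rcases Nat.eq_zero_or_pos α with rfl | hα
  · exact ⟨X, _, hL.singletons⟩
  · exact ⟨X, Y, by rwa [max_eq_left hα]⟩

/-- Lemma 4: an `(l, α)`-ladder in a family of sets contains an `a`-union-free
subfamily of size at least the size of the ladder, which is `l · max {α, 1}`. -/
theorem ladder_aUnionFree (a : ℕ) (ha : 2 ≤ a) (F : Finset (Finset ℕ)) (l α : ℕ)
    (h : HasLadderIn (↑F) l α) :
    ∃ G ⊆ F, AUnionFree a G ∧ l * max α 1 ≤ G.card := by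
  obtain ⟨X, Y, hL⟩ := h.exists_isLadder_max_one
  exact ⟨(range l).biUnion Y, coe_subset.mp hL.coe_biUnion_subset,
    hL.aUnionFree_biUnion (by omega), hL.card_biUnion.ge⟩
end

section
/- Let m ≥ a ≥ 2 be integers. Every partially ordered set P on m elements contains either an a-degenerate subset of size at least max{a, a^{1/4}·√m/3}, or an (ℓ,α)-ladder of size at least max{a, a^{1/4}·√m/3} (i.e., with ℓ·max{α,1} ≥ max{a, a^{1/4}·√m/3}). -/
/-- A subset `S` of a poset is *`a`-degenerate* if no element of `S` is strictly
greater than `a` other elements of `S`. -/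
def ADegenerate {P : Type*} [Preorder P] (a : ℕ) (S : Finset P) : Prop :=
  ∀ x ∈ S, ¬ ∃ T ⊆ S, T.card = a ∧ ∀ y ∈ T, y < x

/-- A poset contains an `(l, α)`-ladder: a chain `X 0 < X 1 < ⋯ < X (l-1)` together
with `l` antichains `Y 0, …, Y (l-1)`, each of size `α`, such that every `y ∈ Y i`
satisfies `y ≤ X i`, and no `y ∈ Y (i+1)` satisfies `y ≤ X i`. -/
def HasLadder (P : Type*) [Preorder P] (l α : ℕ) : Prop :=
  ∃ (X : ℕ → P) (Y : ℕ → Finset P),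
    (∀ i j, i < j → j < l → X i < X j) ∧
    (∀ i, i < l → (Y i).card = α) ∧
    (∀ i, i < l → IsAntichain (· ≤ ·) (↑(Y i) : Set P)) ∧
    (∀ i, i < l → ∀ y ∈ Y i, y ≤ X i) ∧
    (∀ i, i + 1 < l → ∀ y ∈ Y (i + 1), ¬ y ≤ X i)

/-!
Suppose every `a`-degenerate set and every ladder has size at most `d < σ = a^{1/4} √m / 3`,
and `σ > a` (otherwise any `a` elements form an `a`-degenerate set). Choose `τ, κ ≈ √a` with
`τ κ < a` and peel the poset in rounds, each removing a maximal `a`-degenerate set, chosen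
greedily from the top, among the remaining elements of height `< τ`. A survivor of a round either
was low, and then lies above `a` removed low elements: all but the lowest of them avoid it and,
spanning only `τ` levels, contain an antichain of size `κ`, a new rung on the ladder carried by
the lowest one. Or it was high, and lies above a remaining element `τ` levels lower. Either way
the credit `t τ + height` of the ladder it carries grows by `τ` per round, while short ladders
and chains keep it below `d τ / κ + d`; so after `d / κ + d / τ + 1` rounds nothing survives, and
`m ≤ (d / κ + d / τ + 1) d ≈ 2 σ² / √a`, which contradicts `σ² = √a m / 9`.
-/

open Finset
open scoped Classical

section Height

variable {P : Type*} [Preorder P] [WellFoundedLT P]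

/-- The height of `x` over `R`: the length of the longest chain `y₀ < ⋯ < yₙ < x` in `R`. -/
noncomputable def heightIn (R : Finset P) : P → ℕ :=
  WellFoundedLT.fix fun x rec =>
    {y ∈ R | y < x}.attach.sup fun y => rec y.1 (mem_filter.mp y.2).2 + 1

theorem heightIn_eq (R : Finset P) (x : P) :
    heightIn R x = {y ∈ R | y < x}.sup fun y => heightIn R y + 1 := by
  rw [heightIn, WellFoundedLT.fix_eq]
  exact sup_attach _ fun y => heightIn R y + 1

theorem heightIn_lt_heightIn {R : Finset P} {x y : P} (hy : y ∈ R) (hyx : y < x) :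
    heightIn R y < heightIn R x := by
  rw [heightIn_eq R x]
  exact Nat.lt_of_succ_le (le_sup (f := fun y => heightIn R y + 1) (mem_filter.mpr ⟨hy, hyx⟩))

theorem heightIn_mono {R R' : Finset P} (h : R ⊆ R') (x : P) : heightIn R x ≤ heightIn R' x := by
  induction x using WellFoundedLT.induction with
  | _ x ih =>
    rw [heightIn_eq R, heightIn_eq R']
    refine Finset.sup_le fun y hy => ?_
    have hy' := mem_filter.mp hy
    exact (Nat.succ_le_succ (ih y hy'.2)).trans
      (le_sup (f := fun y => heightIn R' y + 1) (mem_filter.mpr ⟨h hy'.1, hy'.2⟩))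

theorem exists_lt_le_heightIn {R : Finset P} {x : P} {n : ℕ} (h : n + 1 ≤ heightIn R x) :
    ∃ y ∈ R, y < x ∧ n ≤ heightIn R y := by
  rw [heightIn_eq] at h
  obtain ⟨y, hy, hny⟩ := (Finset.le_sup_iff n.succ_pos).mp h
  exact ⟨y, (mem_filter.mp hy).1, (mem_filter.mp hy).2, by omega⟩

theorem exists_lt_heightIn_add_lt {R R' : Finset P} (hR : R ⊆ R') {x : P} {n : ℕ}
    (h : n + 1 ≤ heightIn R x) : ∃ w ∈ R, w < x ∧ heightIn R' w + n < heightIn R' x := by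
  induction n generalizing x with
  | zero =>
    obtain ⟨w, hw, hwx, -⟩ := exists_lt_le_heightIn h
    exact ⟨w, hw, hwx, heightIn_lt_heightIn (hR hw) hwx⟩
  | succ n ih =>
    obtain ⟨y, hy, hyx, hny⟩ := exists_lt_le_heightIn h
    obtain ⟨w, hw, hwy, hdrop⟩ := ih hny
    have := heightIn_lt_heightIn (hR hy) hyx
    exact ⟨w, hw, hwy.trans hyx, by omega⟩

end Height

theorem exists_antichain_of_heightIn_lt {P : Type*} [PartialOrder P] [WellFoundedLT P]
    {Q : Finset P} {τ n : ℕ} (hQ : ∀ y ∈ Q, heightIn Q y < τ) (hcard : τ * n < #Q) :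
    ∃ A ⊆ Q, #A = n + 1 ∧ IsAntichain (· ≤ ·) (↑A : Set P) := by
  obtain ⟨k, -, hk⟩ := exists_lt_card_fiber_of_mul_lt_card_of_maps_to
    (fun y hy => mem_range.mpr (hQ y hy)) (by rwa [card_range])
  obtain ⟨A, hA, hAcard⟩ := exists_subset_card_eq hk
  refine ⟨A, hA.trans (filter_subset _ _), hAcard, fun x hx y hy hne hxy => ?_⟩
  have hx' := mem_filter.mp (hA hx)
  have hy' := mem_filter.mp (hA hy)
  exact (heightIn_lt_heightIn hx'.1 (hxy.lt_of_ne hne)).ne (hx'.2.trans hy'.2.symm)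

section Ladder

variable {P : Type*} [Preorder P]

structure IsLadder_s10 (X : ℕ → P) (Y : ℕ → Finset P) (l α : ℕ) : Prop where
  chain : ∀ i j, i < j → j < l → X i < X j
  card : ∀ i, i < l → (Y i).card = α
  antichain : ∀ i, i < l → IsAntichain (· ≤ ·) (↑(Y i) : Set P)
  le : ∀ i, i < l → ∀ y ∈ Y i, y ≤ X i
  not_le : ∀ i, i + 1 < l → ∀ y ∈ Y (i + 1), ¬ y ≤ X i

theorem IsLadder_s10.hasLadder {X : ℕ → P} {Y : ℕ → Finset P} {l α : ℕ} (h : IsLadder_s10 X Y l α) :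
    HasLadder P l α :=
  ⟨X, Y, h.chain, h.card, h.antichain, h.le, h.not_le⟩

theorem isLadder_zero (X : ℕ → P) (Y : ℕ → Finset P) (α : ℕ) : IsLadder_s10 X Y 0 α :=
  ⟨by omega, by omega, by omega, by omega, by omega⟩

theorem IsLadder_s10.snoc {X : ℕ → P} {Y : ℕ → Finset P} {t α : ℕ} (h : IsLadder_s10 X Y t α) {u : P}
    {A : Finset P} (hXu : ∀ i < t, X i < u) (hA : A.card = α)
    (hAanti : IsAntichain (· ≤ ·) (↑A : Set P)) (hAu : ∀ y ∈ A, y ≤ u)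
    (hAX : ∀ y ∈ A, ∀ i < t, ¬ y ≤ X i) :
    IsLadder_s10 (Function.update X t u) (Function.update Y t A) (t + 1) α := by
  refine ⟨fun i j hij hj => ?_, fun i hi => ?_, fun i hi => ?_, fun i hi => ?_, fun i hi => ?_⟩
  · rcases (Nat.lt_succ_iff.mp hj).lt_or_eq with hj | rfl
    · simpa [Function.update_of_ne hj.ne, Function.update_of_ne (hij.trans hj).ne] using
        h.chain i j hij hj
    · simpa [Function.update_of_ne hij.ne] using hXu i hij
  · rcases (Nat.lt_succ_iff.mp hi).lt_or_eq with hi | rfl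
    · simpa [Function.update_of_ne hi.ne] using h.card i hi
    · simpa using hA
  · rcases (Nat.lt_succ_iff.mp hi).lt_or_eq with hi | rfl
    · simpa [Function.update_of_ne hi.ne] using h.antichain i hi
    · simpa using hAanti
  · rcases (Nat.lt_succ_iff.mp hi).lt_or_eq with hi | rfl
    · simpa [Function.update_of_ne hi.ne] using h.le i hi
    · simpa using hAu
  · rw [Function.update_of_ne (show i ≠ t by omega)]
    rcases (Nat.lt_succ_iff.mp hi).lt_or_eq with hi | hi
    · rw [Function.update_of_ne hi.ne]
      exact h.not_le i hi
    · rw [hi, Function.update_self]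
      exact fun y hy => hAX y hy i (by omega)

def LadderBelow (α t : ℕ) (u : P) : Prop :=
  ∃ X Y, IsLadder_s10 X Y t α ∧ ∀ i < t, X i ≤ u

theorem ladderBelow_zero (α : ℕ) (u : P) : LadderBelow α 0 u :=
  ⟨fun _ => u, fun _ => ∅, isLadder_zero _ _ α, by omega⟩

theorem LadderBelow.hasLadder {α t : ℕ} {u : P} (h : LadderBelow α t u) : HasLadder P t α :=
  let ⟨_, _, hl, _⟩ := h; hl.hasLadder

theorem LadderBelow.mono {α t : ℕ} {u u' : P} (h : LadderBelow α t u) (hu : u ≤ u') :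
    LadderBelow α t u' :=
  let ⟨X, Y, hl, hX⟩ := h; ⟨X, Y, hl, fun i hi => (hX i hi).trans hu⟩

theorem LadderBelow.snoc {α t : ℕ} {v u : P} (h : LadderBelow α t v) (hvu : v < u) {A : Finset P}
    (hA : A.card = α) (hAanti : IsAntichain (· ≤ ·) (↑A : Set P)) (hAu : ∀ y ∈ A, y ≤ u)
    (hAv : ∀ y ∈ A, ¬ y ≤ v) : LadderBelow α (t + 1) u := by
  obtain ⟨X, Y, hl, hX⟩ := h
  refine ⟨_, _, hl.snoc (fun i hi => (hX i hi).trans_lt hvu) hA hAanti hAu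
    fun y hy i hi hyX => hAv y hy (hyX.trans (hX i hi)), fun i hi => ?_⟩
  rcases (Nat.lt_succ_iff.mp hi).lt_or_eq with hi | rfl
  · simpa [Function.update_of_ne hi.ne] using (hX i hi).trans hvu.le
  · simp

theorem ladderBelow_one_of_le_heightIn [WellFoundedLT P] {R : Finset P} {x : P} {n : ℕ}
    (h : n ≤ heightIn R x) : LadderBelow 1 n x := by
  induction n generalizing x with
  | zero => exact ladderBelow_zero 1 x
  | succ n ih =>
    obtain ⟨y, -, hyx, hny⟩ := exists_lt_le_heightIn h
    exact (ih hny).snoc hyx (card_singleton x) (by simp) (by simp) (by simpa using hyx.not_ge)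

end Ladder

section Degenerate

variable {P : Type*} [Preorder P]

theorem aDegenerate_iff {a : ℕ} {S : Finset P} :
    ADegenerate a S ↔ ∀ x ∈ S, #{y ∈ S | y < x} < a := by
  refine forall₂_congr fun x _ => ⟨fun h => not_le.mp fun ha => h ?_, fun h ⟨T, hT, hTa, hTx⟩ => ?_⟩
  · obtain ⟨T, hT, hTa⟩ := exists_subset_card_eq ha
    exact ⟨T, hT.trans (filter_subset _ _), hTa, fun y hy => (mem_filter.mp (hT hy)).2⟩
  · exact (h.trans_le (hTa ▸ card_le_card fun y hy => mem_filter.mpr ⟨hT hy, hTx y hy⟩)).false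

theorem ADegenerate.of_card_le {a : ℕ} {S : Finset P} (hS : #S ≤ a) : ADegenerate a S :=
  aDegenerate_iff.mpr fun x hx =>
    (card_lt_card (filter_ssubset (p := (· < x)).mpr ⟨x, hx, lt_irrefl x⟩)).trans_le hS

theorem ADegenerate.insert {a : ℕ} {S : Finset P} (hS : ADegenerate a S) {x : P}
    (hx : ∀ z ∈ S, ¬ x < z) (hxa : #{y ∈ S | y < x} < a) : ADegenerate a (insert x S) := by
  rw [aDegenerate_iff] at hS ⊢
  intro z hz
  rcases mem_insert.mp hz with rfl | hz
  · simpa [filter_insert] using hxa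
  · simpa [filter_insert, hx z hz] using hS z hz

/-- Built from the top: a maximal element of `B` is kept whenever that keeps the set degenerate. -/
theorem exists_aDegenerate_subset_forall_le_card (a : ℕ) (B : Finset P) :
    ∃ S ⊆ B, ADegenerate a S ∧ ∀ z ∈ B \ S, a ≤ #{y ∈ S | y < z} := by
  induction B using Finset.strongInduction with
  | _ B ih =>
    rcases B.eq_empty_or_nonempty with rfl | hB
    · exact ⟨∅, subset_rfl, .of_card_le (by simp), by simp⟩
    obtain ⟨x, hx⟩ := exists_maximal hB
    obtain ⟨S, hSB, hS, hrej⟩ := ih _ (erase_ssubset hx.prop)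
    have hrej' : ∀ z ∈ B \ S, z ≠ x → a ≤ #{y ∈ S | y < z} := fun z hz hzx =>
      hrej z (mem_sdiff.mpr ⟨mem_erase.mpr ⟨hzx, (mem_sdiff.mp hz).1⟩, (mem_sdiff.mp hz).2⟩)
    by_cases hxa : #{y ∈ S | y < x} < a
    · refine ⟨insert x S, insert_subset hx.prop (hSB.trans (erase_subset x B)),
        hS.insert (fun z hz hxz => hxz.not_ge (hx.2 (mem_of_mem_erase (hSB hz)) hxz.le)) hxa,
        fun z hz => ?_⟩
      have hz' := mem_sdiff.mp hz
      exact (hrej' z (mem_sdiff.mpr ⟨hz'.1, fun h => hz'.2 (mem_insert_of_mem h)⟩)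
        fun h => hz'.2 (h ▸ mem_insert_self x S)).trans
        (card_le_card (filter_subset_filter _ (subset_insert x S)))
    · refine ⟨S, hSB.trans (erase_subset x B), hS, fun z hz => ?_⟩
      by_cases hzx : z = x
      · exact hzx ▸ not_lt.mp hxa
      · exact hrej' z hz hzx

end Degenerate

section Peeling

variable {P : Type*} [PartialOrder P] [Fintype P] {κ τ K : ℕ}

/-- The invariant of the peeling after `K` rounds: each round either adds a rung to the ladder
below a survivor or lowers the survivor by `τ` levels. -/
def HasLadderCredit (κ τ K : ℕ) (u : P) : Prop :=
  ∃ t, LadderBelow κ t u ∧ K * τ ≤ t * τ + heightIn univ u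

theorem hasLadderCredit_zero (u : P) : HasLadderCredit κ τ 0 u :=
  ⟨0, ladderBelow_zero κ u, by simp⟩

/-- A new rung: below `u` sit `a` low elements of `S`; the lowest carries a ladder, and the
others avoid it and contain an antichain of size `κ`. -/
theorem HasLadderCredit.succ_of_le_card {a : ℕ} (hτ : 0 < τ) (hκ : 0 < κ) (hτκ : τ * κ < a)
    {S : Finset P} (hS : ∀ y ∈ S, heightIn S y < τ) (hSK : ∀ v ∈ S, HasLadderCredit κ τ K v)
    {u : P} (hu : a ≤ #{y ∈ S | y < u}) : HasLadderCredit κ τ (K + 1) u := by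
  obtain ⟨n, rfl⟩ : ∃ n, κ = n + 1 := ⟨κ - 1, by omega⟩
  set F := {y ∈ S | y < u}
  obtain ⟨v, hv⟩ := exists_minimal (card_pos.mp (by omega : 0 < #F))
  have hvF := mem_filter.mp hv.prop
  set Q := F.erase v
  have hQF : Q ⊆ F := erase_subset v F
  have hQv : ∀ y ∈ Q, ¬ y ≤ v := fun y hy hyv =>
    (mem_erase.mp hy).1 (le_antisymm hyv (hv.2 (hQF hy) hyv))
  have hQ : ∀ y ∈ Q, heightIn Q y < τ := fun y hy =>
    (heightIn_mono (hQF.trans (filter_subset _ _)) y).trans_lt (hS y (mem_filter.mp (hQF hy)).1)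
  have hQcard : τ * n < #Q := by
    rw [card_erase_of_mem hv.prop]
    rw [mul_add_one] at hτκ
    omega
  obtain ⟨A, hAQ, hA, hAanti⟩ := exists_antichain_of_heightIn_lt hQ hQcard
  obtain ⟨t, hl, hcredit⟩ := hSK v hvF.1
  refine ⟨t + 1, hl.snoc hvF.2 hA hAanti (fun y hy => (mem_filter.mp (hQF (hAQ hy))).2.le)
    fun y hy => hQv y (hAQ hy), ?_⟩
  have := heightIn_lt_heightIn (mem_univ v) hvF.2
  rw [add_one_mul, add_one_mul]
  omega

theorem HasLadderCredit.succ_of_le_heightIn (hτ : 0 < τ) {R : Finset P}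
    (hR : ∀ w ∈ R, HasLadderCredit κ τ K w) {u : P} (hu : τ ≤ heightIn R u) :
    HasLadderCredit κ τ (K + 1) u := by
  obtain ⟨w, hw, hwu, hdrop⟩ :=
    exists_lt_heightIn_add_lt (subset_univ R) (x := u) (n := τ - 1) (by omega)
  obtain ⟨t, hl, hcredit⟩ := hR w hw
  refine ⟨t, hl.mono hwu.le, ?_⟩
  rw [add_one_mul]
  omega

/-- One round of peeling: `S` is chosen among the elements of height `< τ` over `R`. -/
theorem exists_aDegenerate_forall_hasLadderCredit_succ {a : ℕ} (hτ : 0 < τ) (hκ : 0 < κ)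
    (hτκ : τ * κ < a) {R : Finset P} (hR : ∀ u ∈ R, HasLadderCredit κ τ K u) :
    ∃ S ⊆ R, ADegenerate a S ∧ ∀ u ∈ R \ S, HasLadderCredit κ τ (K + 1) u := by
  obtain ⟨S, hSB, hS, hrej⟩ := exists_aDegenerate_subset_forall_le_card a {x ∈ R | heightIn R x < τ}
  have hSR : S ⊆ R := hSB.trans (filter_subset _ _)
  refine ⟨S, hSR, hS, fun u hu => ?_⟩
  obtain ⟨huR, huS⟩ := mem_sdiff.mp hu
  by_cases hlow : heightIn R u < τ
  · refine HasLadderCredit.succ_of_le_card hτ hκ hτκ (fun y hy => ?_) (fun v hv => hR v (hSR hv))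
      (hrej u (mem_sdiff.mpr ⟨mem_filter.mpr ⟨huR, hlow⟩, huS⟩))
    exact (heightIn_mono hSR y).trans_lt (mem_filter.mp (hSB hy)).2
  · exact HasLadderCredit.succ_of_le_heightIn hτ hR (not_lt.mp hlow)

theorem exists_card_le_forall_hasLadderCredit {a d : ℕ} (hτ : 0 < τ) (hκ : 0 < κ)
    (hτκ : τ * κ < a) (hdeg : ∀ S : Finset P, ADegenerate a S → #S ≤ d) (K : ℕ) :
    ∃ R : Finset P, Fintype.card P ≤ K * d + #R ∧ ∀ u ∈ R, HasLadderCredit κ τ K u := by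
  induction K with
  | zero => exact ⟨univ, by simp, fun u _ => hasLadderCredit_zero u⟩
  | succ K ih =>
    obtain ⟨R, hcard, hR⟩ := ih
    obtain ⟨S, hSR, hS, hRS⟩ := exists_aDegenerate_forall_hasLadderCredit_succ hτ hκ hτκ hR
    refine ⟨R \ S, ?_, hRS⟩
    have := card_sdiff_add_card_eq_card hSR
    have := hdeg S hS
    rw [add_one_mul]
    omega

/-- Peeling for `d / κ + d / τ + 1` rounds empties the poset when ladders are short. -/
theorem card_le_of_aDegenerate_le_of_hasLadder_le {a d : ℕ} (hτ : 0 < τ) (hκ : 0 < κ)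
    (hτκ : τ * κ < a) (hdeg : ∀ S : Finset P, ADegenerate a S → #S ≤ d)
    (hlad : ∀ l α, HasLadder P l α → l * max α 1 ≤ d) :
    Fintype.card P ≤ (d / κ + d / τ + 1) * d := by
  obtain ⟨R, hcard, hR⟩ := exists_card_le_forall_hasLadderCredit hτ hκ hτκ hdeg (d / κ + d / τ + 1)
  suffices R = ∅ by simpa [this] using hcard
  refine eq_empty_of_forall_notMem fun u hu => ?_
  obtain ⟨t, hl, hcredit⟩ := hR u hu
  have ht : t * τ ≤ d / κ * τ := by
    gcongr
    have := hlad t κ hl.hasLadder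
    rw [max_eq_left (show 1 ≤ κ from hκ)] at this
    exact (Nat.le_div_iff_mul_le hκ).mpr this
  have hu : heightIn univ u ≤ d := by
    by_contra! h
    simpa using hlad _ 1 (ladderBelow_one_of_le_heightIn h).hasLadder
  have := Nat.lt_div_mul_add (a := d) hτ
  rw [add_one_mul, add_mul] at hcredit
  omega

end Peeling

/-- `τ = ⌊√a⌋` and `κ = ⌊(a - 1) / τ⌋`. -/
theorem exists_mul_lt_sqrt_sub_one_le {a : ℕ} (ha : 2 ≤ a) :
    ∃ τ κ : ℕ, 0 < τ ∧ 0 < κ ∧ τ * κ < a ∧ √(a : ℝ) - 1 ≤ τ ∧ √(a : ℝ) - 1 ≤ κ := by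
  have hτ : 0 < Nat.sqrt a := Nat.sqrt_pos.mpr (by omega)
  have hτa : Nat.sqrt a < a := Nat.sqrt_lt_self (by omega)
  refine ⟨Nat.sqrt a, (a - 1) / Nat.sqrt a, hτ, Nat.div_pos (by omega) hτ,
    (Nat.mul_div_le (a - 1) _).trans_lt (by omega),
    by linarith [Real.real_sqrt_le_nat_sqrt_succ (a := a)], ?_⟩
  have hdiv : a ≤ ((a - 1) / Nat.sqrt a + 1) * Nat.sqrt a := by
    have := Nat.lt_div_mul_add (a := a - 1) hτ
    rw [add_one_mul]
    omega
  have hdiv' : (a : ℝ) ≤ (((a - 1) / Nat.sqrt a : ℕ) + 1) * Nat.sqrt a := by exact_mod_cast hdiv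
  have hsq := Real.sq_sqrt (Nat.cast_nonneg (α := ℝ) a)
  have hpos : 0 < √(a : ℝ) := Real.sqrt_pos.mpr (by positivity)
  nlinarith [Real.nat_sqrt_le_real_sqrt (a := a)]

theorem rpow_quarter_mul_sqrt_div_three_sq {a m : ℝ} (ha : 0 ≤ a) (hm : 0 ≤ m) :
    (a ^ ((1 : ℝ) / 4) * √m / 3) ^ 2 = √a * m / 9 := by
  rw [div_pow, mul_pow, Real.sq_sqrt hm, ← Real.rpow_natCast, ← Real.rpow_mul ha,
    Real.sqrt_eq_rpow]
  norm_num

theorem mul_lt_of_sqrt_sub_one_le {a m τ κ σ : ℝ} (ha : 2 ≤ a) (hτ : √a - 1 ≤ τ)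
    (hκ : √a - 1 ≤ κ) (haσ : a < σ) (hσ : σ ^ 2 = √a * m / 9) :
    (σ / κ + σ / τ + 1) * σ < m := by
  set r := √a
  have hr : r ^ 2 = a := Real.sq_sqrt (by linarith)
  have hr' : 7 / 5 < r := by nlinarith [Real.sqrt_nonneg a]
  have hσ0 : 0 < σ := by linarith
  have hm : m = 9 * σ / r * σ := by
    field_simp
    linarith
  have hkey : 2 * σ / (r - 1) + 1 < 9 * σ / r := by
    rw [div_add_one (by linarith), div_lt_div_iff₀ (by linarith) (by linarith)]
    nlinarith [mul_lt_mul_of_pos_right haσ (by linarith : (0 : ℝ) < 7 * r - 9)]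
  calc (σ / κ + σ / τ + 1) * σ ≤ (2 * σ / (r - 1) + 1) * σ := by
        gcongr
        rw [two_mul, add_div]
        gcongr <;> linarith
    _ < m := by
        rw [hm]
        gcongr

/-- Theorem 4: for `m ≥ a ≥ 2`, every poset on `m` elements contains an
`a`-degenerate subset of size at least `max {a, a^{1/4}·√m/3}`, or an
`(l, α)`-ladder of size `l · max {α, 1}` at least `max {a, a^{1/4}·√m/3}`. -/
theorem poset_degenerate_or_ladder {P : Type*} [PartialOrder P] [Fintype P]
    (m a : ℕ) (ha : 2 ≤ a) (ham : a ≤ m) (hP : Fintype.card P = m) :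
    (∃ S : Finset P, ADegenerate a S ∧
      max (a : ℝ) ((a : ℝ) ^ ((1 : ℝ) / 4) * Real.sqrt m / 3) ≤ (S.card : ℝ)) ∨
    (∃ l α : ℕ, HasLadder P l α ∧
      max (a : ℝ) ((a : ℝ) ^ ((1 : ℝ) / 4) * Real.sqrt m / 3) ≤ ((l * max α 1 : ℕ) : ℝ)) := by
  set σ : ℝ := (a : ℝ) ^ ((1 : ℝ) / 4) * Real.sqrt m / 3
  rcases le_or_gt σ a with hσa | hσa
  · obtain ⟨S, -, hS⟩ := exists_subset_card_eq (s := (univ : Finset P)) (n := a)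
      (by rwa [card_univ, hP])
    exact .inl ⟨S, .of_card_le hS.le, by simp [hS, hσa]⟩
  by_contra! h
  rw [max_eq_right hσa.le] at h
  obtain ⟨hdeg, hlad⟩ := h
  obtain ⟨τ, κ, hτ, hκ, hτκ, hτa, hκa⟩ := exists_mul_lt_sqrt_sub_one_le ha
  have hfloor : ∀ n : ℕ, (n : ℝ) < σ → n ≤ ⌊σ⌋₊ := fun n hn => Nat.le_floor hn.le
  have hcard := card_le_of_aDegenerate_le_of_hasLadder_le hτ hκ hτκ
    (fun S hS => hfloor _ (hdeg S hS)) (fun l α hl => hfloor _ (hlad l α hl))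
  have hdσ : (⌊σ⌋₊ : ℝ) ≤ σ := Nat.floor_le (by positivity)
  have hm : (m : ℝ) ≤ (σ / κ + σ / τ + 1) * σ := by
    calc (m : ℝ) ≤ ((⌊σ⌋₊ / κ + ⌊σ⌋₊ / τ + 1) * ⌊σ⌋₊ : ℕ) := by exact_mod_cast hP ▸ hcard
      _ ≤ (σ / κ + σ / τ + 1) * σ := by
        push_cast
        gcongr <;> exact Nat.cast_div_le.trans (by gcongr)
  exact hm.not_gt (mul_lt_of_sqrt_sub_one_le (by exact_mod_cast ha) hτa hκa hσa
    (rpow_quarter_mul_sqrt_div_three_sq (by positivity) (by positivity)))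
end

section
/- For every positive integer n, every union-free subfamily of the Erdős–Shelah grid family {X_{ij} : 1 ≤ i, j ≤ n} has size at most 2n − 1. -/
/-- The set `X_{ij} = {x ∈ ℕ : n + 1 - i ≤ x ≤ n + j}`. -/
def gridSet (n i j : ℕ) : Finset ℕ := Finset.Icc (n + 1 - i) (n + j)

/-- The Erdős–Shelah grid family `{X_{ij} : 1 ≤ i, j ≤ n}`. -/
def ESgrid (n : ℕ) : Finset (Finset ℕ) :=
  (Finset.Icc 1 n ×ˢ Finset.Icc 1 n).image fun p => gridSet n p.1 p.2

lemma gridSet_union (n i j k l : ℕ) (hi : 1 ≤ i) (hk : 1 ≤ k) :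
    gridSet n i j ∪ gridSet n k l = gridSet n (max i k) (max j l) := by
  ext x
  simp only [gridSet, Finset.mem_union, Finset.mem_Icc]
  omega

lemma gridSet_inj {n i j i' j' : ℕ} (hi : 1 ≤ i) (hi2 : i ≤ n) (hj : 1 ≤ j)
    (hi' : 1 ≤ i') (hi2' : i' ≤ n) (hj' : 1 ≤ j')
    (heq : gridSet n i j = gridSet n i' j') : i = i' ∧ j = j' := by
  have h1 : (n + 1 - i) ∈ gridSet n i' j' := by
    rw [← heq]; simp [gridSet, Finset.mem_Icc]; omega
  have h2 : (n + 1 - i') ∈ gridSet n i j := by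
    rw [heq]; simp [gridSet, Finset.mem_Icc]; omega
  have h3 : (n + j) ∈ gridSet n i' j' := by
    rw [← heq]; simp [gridSet, Finset.mem_Icc]; omega
  have h4 : (n + j') ∈ gridSet n i j := by
    rw [heq]; simp [gridSet, Finset.mem_Icc]; omega
  simp [gridSet, Finset.mem_Icc] at h1 h2 h3 h4
  omega

/-- Every union-free subfamily of the Erdős–Shelah grid family has size at most
`2n - 1`. -/
theorem esgrid_unionFree_le (n : ℕ) (hn : 0 < n)
    (G : Finset (Finset ℕ)) (hG : G ⊆ ESgrid n) (h : UnionFree G) :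
    G.card ≤ 2 * n - 1 := by
  classical
  set f : ℕ × ℕ → Finset ℕ := fun p => gridSet n p.1 p.2 with hf
  set S : Finset (ℕ × ℕ) :=
    (Finset.Icc 1 n ×ˢ Finset.Icc 1 n).filter (fun p => f p ∈ G) with hS
  have hGS : G = S.image f := by
    apply Finset.Subset.antisymm
    · intro X hX
      obtain ⟨p, hp, hpX⟩ := Finset.mem_image.1 (hG hX)
      exact Finset.mem_image.2 ⟨p, Finset.mem_filter.2 ⟨hp, by show gridSet n p.1 p.2 ∈ G; rwa [hpX]⟩, hpX⟩
    · intro X hX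
      obtain ⟨p, hp, hpX⟩ := Finset.mem_image.1 hX
      exact hpX ▸ (Finset.mem_filter.1 hp).2
  have hSbound : ∀ p ∈ S, 1 ≤ p.1 ∧ p.1 ≤ n ∧ 1 ≤ p.2 ∧ p.2 ≤ n := by
    intro p hp
    have := (Finset.mem_filter.1 hp).1
    rw [Finset.mem_product, Finset.mem_Icc, Finset.mem_Icc] at this
    exact ⟨this.1.1, this.1.2, this.2.1, this.2.2⟩
  have hfS : ∀ p ∈ S, f p ∈ G := fun p hp => (Finset.mem_filter.1 hp).2
  have hinj : ∀ p ∈ S, ∀ q ∈ S, f p = f q → p = q := by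
    intro p hp q hq hpq
    obtain ⟨h1, h2, h3, h4⟩ := hSbound p hp
    obtain ⟨h1', h2', h3', h4'⟩ := hSbound q hq
    obtain ⟨e1, e2⟩ := gridSet_inj h1 h2 h3 h1' h2' h3' hpq
    exact Prod.ext e1 e2
  -- union-free transfers: each element leftmost in row or lowest in column
  set R : Finset (ℕ × ℕ) :=
    S.filter (fun p => ∀ q ∈ S, q.2 = p.2 → p.1 ≤ q.1) with hR
  set C : Finset (ℕ × ℕ) :=
    S.filter (fun p => ∀ q ∈ S, q.1 = p.1 → p.2 ≤ q.2) with hC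
  have hcover : S ⊆ R ∪ C := by
    intro p hp
    by_contra hpc
    rw [Finset.mem_union] at hpc
    push_neg at hpc
    have hnR : ¬ ∀ q ∈ S, q.2 = p.2 → p.1 ≤ q.1 :=
      fun hh => hpc.1 (Finset.mem_filter.2 ⟨hp, hh⟩)
    have hnC : ¬ ∀ q ∈ S, q.1 = p.1 → p.2 ≤ q.2 :=
      fun hh => hpc.2 (Finset.mem_filter.2 ⟨hp, hh⟩)
    push_neg at hnR hnC
    obtain ⟨x, hxS, hx2, hx1⟩ := hnR
    obtain ⟨y, hyS, hy1, hy2⟩ := hnC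
    obtain ⟨b1, b2, b3, b4⟩ := hSbound p hp
    obtain ⟨c1, c2, c3, c4⟩ := hSbound x hxS
    obtain ⟨d1, d2, d3, d4⟩ := hSbound y hyS
    have hx1' : x.1 < p.1 := by omega
    have hy2' : y.2 < p.2 := by omega
    have hunion : f x ∪ f y = f p := by
      rw [hf]
      have := gridSet_union n x.1 x.2 y.1 y.2 c1 d1
      simp only at this ⊢
      rw [this, hx2, hy1]
      congr 1 <;> omega
    have hxy : x ≠ y := by
      intro e; rw [e] at hx2; omega
    have hxp : x ≠ p := by intro e; rw [e] at hx1'; omega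
    have hyp : y ≠ p := by intro e; rw [e] at hy2'; omega
    have fxy : f x ≠ f y := fun e => hxy (hinj x hxS y hyS e)
    have fxp : f x ≠ f p := fun e => hxp (hinj x hxS p hp e)
    have fyp : f y ≠ f p := fun e => hyp (hinj y hyS p hp e)
    exact h (f x) (hfS x hxS) (f y) (hfS y hyS) (f p) (hfS p hp) fxy fxp fyp hunion
  have hRcard : R.card ≤ n := by
    have : R.card = (R.image Prod.snd).card := by
      rw [Finset.card_image_of_injOn]
      intro p hp q hq hpq
      rw [hR, Finset.mem_coe, Finset.mem_filter] at hp hq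
      have h1 := hp.2 q hq.1 hpq.symm
      have h2 := hq.2 p hp.1 hpq
      exact Prod.ext (le_antisymm h1 h2) hpq
    rw [this]
    calc (R.image Prod.snd).card ≤ (Finset.Icc 1 n).card := by
          apply Finset.card_le_card
          intro b hb
          obtain ⟨p, hp, hpb⟩ := Finset.mem_image.1 hb
          have := hSbound p (Finset.mem_of_mem_filter p hp)
          rw [Finset.mem_Icc]; omega
      _ = n := by simp
  have hCcard : C.card ≤ n := by
    have : C.card = (C.image Prod.fst).card := by
      rw [Finset.card_image_of_injOn]
      intro p hp q hq hpq
      rw [hC, Finset.mem_coe, Finset.mem_filter] at hp hq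
      have h1 := hp.2 q hq.1 hpq.symm
      have h2 := hq.2 p hp.1 hpq
      exact Prod.ext hpq (le_antisymm h1 h2)
    rw [this]
    calc (C.image Prod.fst).card ≤ (Finset.Icc 1 n).card := by
          apply Finset.card_le_card
          intro b hb
          obtain ⟨p, hp, hpb⟩ := Finset.mem_image.1 hb
          have := hSbound p (Finset.mem_of_mem_filter p hp)
          rw [Finset.mem_Icc]; omega
      _ = n := by simp
  rcases S.eq_empty_or_nonempty with hSe | hSne
  · rw [hGS, hSe]; simp
  · -- find element in R ∩ C
    have himgne : (S.image Prod.fst).Nonempty := hSne.image _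
    set a := (S.image Prod.fst).min' himgne with ha
    have haS : ∃ q ∈ S, q.1 = a := by
      have := (S.image Prod.fst).min'_mem himgne
      rw [← ha] at this
      obtain ⟨q, hq, hq1⟩ := Finset.mem_image.1 this
      exact ⟨q, hq, hq1⟩
    set Sa := S.filter (fun q => q.1 = a) with hSa
    have hSane : Sa.Nonempty := by
      obtain ⟨q, hq, hq1⟩ := haS
      exact ⟨q, Finset.mem_filter.2 ⟨hq, hq1⟩⟩
    have himgne2 : (Sa.image Prod.snd).Nonempty := hSane.image _
    set b := (Sa.image Prod.snd).min' himgne2 with hb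
    have hab : (a, b) ∈ S := by
      have := (Sa.image Prod.snd).min'_mem himgne2
      rw [← hb] at this
      obtain ⟨q, hq, hq2⟩ := Finset.mem_image.1 this
      rw [hSa, Finset.mem_filter] at hq
      have : q = (a, b) := Prod.ext hq.2 hq2
      exact this ▸ hq.1
    have hmemR : (a, b) ∈ R := by
      rw [hR, Finset.mem_filter]
      refine ⟨hab, fun q hq _ => ?_⟩
      exact Finset.min'_le _ _ (Finset.mem_image_of_mem _ hq)
    have hmemC : (a, b) ∈ C := by
      rw [hC, Finset.mem_filter]
      refine ⟨hab, fun q hq hq1 => ?_⟩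
      apply Finset.min'_le
      exact Finset.mem_image_of_mem _ (Finset.mem_filter.2 ⟨hq, hq1⟩)
    have hinter : 1 ≤ (R ∩ C).card :=
      Finset.card_pos.2 ⟨(a, b), Finset.mem_inter.2 ⟨hmemR, hmemC⟩⟩
    have hcard : S.card ≤ 2 * n - 1 := by
      have h1 : S.card ≤ (R ∪ C).card := Finset.card_le_card hcover
      have h2 : (R ∪ C).card + (R ∩ C).card = R.card + C.card :=
        Finset.card_union_add_card_inter R C
      omega
    calc G.card = (S.image f).card := by rw [hGS]
      _ ≤ S.card := Finset.card_image_le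
      _ ≤ 2 * n - 1 := hcard
end

section
/- For every positive integer n, every union-free subfamily of the extended grid family {X_{ij} : 1 ≤ i ≤ n+1, 1 ≤ j ≤ n} has size at most 2n. -/
/-- The extended grid family `{X_{ij} : 1 ≤ i ≤ n + 1, 1 ≤ j ≤ n}`. -/
def ESgridExt (n : ℕ) : Finset (Finset ℕ) :=
  (Finset.Icc 1 (n + 1) ×ˢ Finset.Icc 1 n).image fun p => gridSet n p.1 p.2

/-!
Every member of the extended grid family is an interval `[a, b]` with `a ≤ n < b`, so it is
determined by the point `(a, b)` of an `(n + 1) × n` grid, and the union of two members is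
`[min a a', max b b']`. Hence a family is union-free exactly when no point `(a, b)` of it has
both a point `(a, b')` with `b' < b` below it and a point `(a', b)` with `a < a'` to its right:
every point is the lowest of its column or the rightmost of its row. There are at most `n + 1`
column minima and at most `n` row maxima, and the rightmost column's lowest point is both, so
the family has at most `2n` members.
-/

open Finset

section ColumnsAndRows

variable {α β : Type*}

def IsColMin [LE β] (S : Finset (α × β)) (z : α × β) : Prop :=
  ∀ x ∈ S, x.1 = z.1 → z.2 ≤ x.2

def IsRowMax [LE α] (S : Finset (α × β)) (z : α × β) : Prop :=
  ∀ y ∈ S, y.2 = z.2 → y.1 ≤ z.1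

lemma injOn_fst_of_isColMin [PartialOrder β] (S : Finset (α × β)) :
    Set.InjOn Prod.fst {z | z ∈ S ∧ IsColMin S z} := by
  rintro x ⟨hx, hxmin⟩ y ⟨hy, hymin⟩ h
  exact Prod.ext h (le_antisymm (hxmin y hy h.symm) (hymin x hx h))

lemma injOn_snd_of_isRowMax [PartialOrder α] (S : Finset (α × β)) :
    Set.InjOn Prod.snd {z | z ∈ S ∧ IsRowMax S z} := by
  rintro x ⟨hx, hxmax⟩ y ⟨hy, hymax⟩ h
  exact Prod.ext (le_antisymm (hymax x hx h) (hxmax y hy h.symm)) h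

lemma exists_isColMin_isRowMax [LinearOrder α] [LinearOrder β] {S : Finset (α × β)}
    (hS : S.Nonempty) :
    ∃ z ∈ S, IsColMin S z ∧ IsRowMax S z := by
  obtain ⟨w, hw, hw_max⟩ := S.exists_max_image Prod.fst hS
  obtain ⟨z, hz, hz_min⟩ :=
    (S.filter (·.1 = w.1)).exists_min_image Prod.snd ⟨w, mem_filter.2 ⟨hw, rfl⟩⟩
  rw [mem_filter] at hz
  exact ⟨z, hz.1, fun x hx hxz ↦ hz_min x (mem_filter.2 ⟨hx, hxz.trans hz.2⟩),
    fun y hy _ ↦ hz.2 ▸ hw_max y hy⟩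

theorem card_add_one_le_of_isColMin_or_isRowMax [LinearOrder α] [LinearOrder β]
    {S : Finset (α × β)} (hS : S.Nonempty) (h : ∀ z ∈ S, IsColMin S z ∨ IsRowMax S z) :
    #S + 1 ≤ #(S.image Prod.fst) + #(S.image Prod.snd) := by
  classical
  set C := S.filter (IsColMin S)
  set R := S.filter (IsRowMax S)
  have hC : #C ≤ #(S.image Prod.fst) :=
    card_le_card_of_injOn Prod.fst (fun z hz ↦ mem_image_of_mem _ (mem_filter.1 hz).1)
      ((injOn_fst_of_isColMin S).mono fun z hz ↦ mem_filter.1 hz)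
  have hR : #R ≤ #(S.image Prod.snd) :=
    card_le_card_of_injOn Prod.snd (fun z hz ↦ mem_image_of_mem _ (mem_filter.1 hz).1)
      ((injOn_snd_of_isRowMax S).mono fun z hz ↦ mem_filter.1 hz)
  have hS_le : #S ≤ #(C ∪ R) := card_le_card fun z hz ↦ by
    rcases h z hz with hz' | hz'
    · exact mem_union_left _ (mem_filter.2 ⟨hz, hz'⟩)
    · exact mem_union_right _ (mem_filter.2 ⟨hz, hz'⟩)
  obtain ⟨z, hz, hzC, hzR⟩ := exists_isColMin_isRowMax hS
  have h_inter : 0 < #(C ∩ R) :=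
    card_pos.2 ⟨z, mem_inter.2 ⟨mem_filter.2 ⟨hz, hzC⟩, mem_filter.2 ⟨hz, hzR⟩⟩⟩
  have := card_union_add_card_inter C R
  omega

end ColumnsAndRows

namespace Finset

variable {α : Type*} [LinearOrder α] [LocallyFiniteOrder α]

lemma Icc_eq_Icc_iff {a b c d : α} (h : a ≤ b) : Icc a b = Icc c d ↔ a = c ∧ b = d := by
  rw [← coe_inj, coe_Icc, coe_Icc, Set.Icc_eq_Icc_iff h]

lemma Icc_union_Icc' {a b c d : α} (h₁ : c ≤ b) (h₂ : a ≤ d) :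
    Icc a b ∪ Icc c d = Icc (min a c) (max b d) := by
  rw [← coe_inj, coe_union, coe_Icc, coe_Icc, coe_Icc, Set.Icc_union_Icc' h₁ h₂]

end Finset

lemma ESgridExt_eq_image_Icc (n : ℕ) :
    ESgridExt n = (Icc 0 n ×ˢ Icc (n + 1) (2 * n)).image fun p ↦ Icc p.1 p.2 := by
  ext X
  simp only [ESgridExt, gridSet, mem_image, mem_product, mem_Icc, Prod.exists]
  constructor
  · rintro ⟨i, j, ⟨⟨hi, hi'⟩, hj, hj'⟩, rfl⟩
    exact ⟨n + 1 - i, n + j, ⟨by omega, by omega, by omega⟩, rfl⟩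
  · rintro ⟨a, b, ⟨⟨-, ha⟩, hb, hb'⟩, rfl⟩
    refine ⟨n + 1 - a, b - n, ⟨⟨by omega, by omega⟩, by omega, by omega⟩, ?_⟩
    rw [show n + 1 - (n + 1 - a) = a by omega, show n + (b - n) = b by omega]

def gridPairs (n : ℕ) (G : Finset (Finset ℕ)) : Finset (ℕ × ℕ) :=
  {p ∈ Icc 0 n ×ˢ Icc (n + 1) (2 * n) | Icc p.1 p.2 ∈ G}

lemma subset_image_gridPairs {n : ℕ} {G : Finset (Finset ℕ)} (hG : G ⊆ ESgridExt n) :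
    G ⊆ (gridPairs n G).image fun p ↦ Icc p.1 p.2 := by
  intro X hX
  obtain ⟨p, hp, rfl⟩ := mem_image.1 (ESgridExt_eq_image_Icc n ▸ hG hX)
  exact mem_image_of_mem _ (mem_filter.2 ⟨hp, hX⟩)

lemma isColMin_or_isRowMax_gridPairs {n : ℕ} {G : Finset (Finset ℕ)} (hG : UnionFree G)
    {z : ℕ × ℕ} (hz : z ∈ gridPairs n G) :
    IsColMin (gridPairs n G) z ∨ IsRowMax (gridPairs n G) z := by
  unfold IsColMin IsRowMax
  by_contra! hzy
  obtain ⟨⟨x, hx, hx₁, hx₂⟩, ⟨y, hy, hy₂, hy₁⟩⟩ := hzy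
  simp only [gridPairs, mem_filter, mem_product, mem_Icc] at hx hy hz
  have hxy : Icc x.1 x.2 ≠ Icc y.1 y.2 := fun e ↦ by
    have := (Icc_eq_Icc_iff (by omega)).1 e; omega
  have hxz : Icc x.1 x.2 ≠ Icc z.1 z.2 := fun e ↦ by
    have := (Icc_eq_Icc_iff (by omega)).1 e; omega
  have hyz : Icc y.1 y.2 ≠ Icc z.1 z.2 := fun e ↦ by
    have := (Icc_eq_Icc_iff (by omega)).1 e; omega
  refine hG _ hx.2 _ hy.2 _ hz.2 hxy hxz hyz ?_
  rw [Icc_union_Icc' (by omega) (by omega), min_eq_left (by omega), max_eq_right (by omega),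
    hx₁, hy₂]

theorem esgridExt_unionFree_le_general (n : ℕ)
    (G : Finset (Finset ℕ)) (hG : G ⊆ ESgridExt n) (h : UnionFree G) :
    G.card ≤ 2 * n := by
  set P := gridPairs n G
  have hGP : #G ≤ #P := (card_le_card (subset_image_gridPairs hG)).trans card_image_le
  rcases P.eq_empty_or_nonempty with hP | hP
  · rw [hP, card_empty] at hGP
    omega
  have hfst : #(P.image Prod.fst) ≤ #(Icc 0 n) :=
    card_le_card (image_subset_iff.2 fun p hp ↦ (mem_product.1 (mem_filter.1 hp).1).1)
  have hsnd : #(P.image Prod.snd) ≤ #(Icc (n + 1) (2 * n)) :=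
    card_le_card (image_subset_iff.2 fun p hp ↦ (mem_product.1 (mem_filter.1 hp).1).2)
  rw [Nat.card_Icc] at hfst hsnd
  have := card_add_one_le_of_isColMin_or_isRowMax hP fun _ ↦ isColMin_or_isRowMax_gridPairs h
  omega

/-- Every union-free subfamily of the extended grid family has size at most `2n`. -/
theorem esgridExt_unionFree_le (n : ℕ) (hn : 0 < n)
    (G : Finset (Finset ℕ)) (hG : G ⊆ ESgridExt n) (h : UnionFree G) :
    G.card ≤ 2 * n :=
  esgridExt_unionFree_le_general n G hG h
end

section
/- For every integer n ≥ 2, every union-free subfamily of the family {X_{ij} : 1 ≤ i, j ≤ n} \ {X_{11}} (which has n² − 1 sets) has size at most 2n − 2. -/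

def JoinFree (S : Finset (ℕ × ℕ)) : Prop :=
  ∀ p ∈ S, ∀ q ∈ S, p.1 < q.1 → q.2 < p.2 → (q.1, p.2) ∉ S

lemma joinFree_subset {S T : Finset (ℕ × ℕ)} (h : T ⊆ S) (hS : JoinFree S) : JoinFree T :=
  fun p hp q hq h1 h2 hr => hS p (h hp) q (h hq) h1 h2 (h hr)

lemma key (N : ℕ) : ∀ S : Finset (ℕ × ℕ), S.card ≤ N → JoinFree S → S.Nonempty →
    (S.card + 1 ≤ (S.image Prod.fst).card + (S.image Prod.snd).card) ∧
    (∀ a b : ℕ, (∃ p ∈ S, p.1 = a) → (∃ p ∈ S, p.2 = b) →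
      (∀ p ∈ S, a ≤ p.1) → (∀ p ∈ S, b ≤ p.2) → (a, b) ∉ S →
      S.card + 2 ≤ (S.image Prod.fst).card + (S.image Prod.snd).card) := by
  induction N with
  | zero =>
    intro S hc hJ hne
    exact absurd hne (by simp [Finset.card_eq_zero.mp (Nat.le_zero.mp hc)])
  | succ N ih =>
    intro S hc hJ hne
    have hneI : (S.image Prod.fst).Nonempty := hne.image _
    set A := (S.image Prod.fst).max' hneI with hA
    have hub1 : ∀ p ∈ S, p.1 ≤ A := fun p hp =>
      Finset.le_max' _ _ (Finset.mem_image_of_mem _ hp)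
    -- the row of A
    have hRne : ((S.filter (fun p => p.1 = A)).image Prod.snd).Nonempty := by
      obtain ⟨x, hx⟩ := Finset.mem_image.mp ((S.image Prod.fst).max'_mem hneI)
      exact ⟨x.2, Finset.mem_image_of_mem _ (Finset.mem_filter.mpr ⟨hx.1, hx.2⟩)⟩
    set B := ((S.filter (fun p => p.1 = A)).image Prod.snd).max' hRne with hB
    have hub2 : ∀ p ∈ S, p.1 = A → p.2 ≤ B := fun p hp hpA =>
      Finset.le_max' _ _ (Finset.mem_image_of_mem _ (Finset.mem_filter.mpr ⟨hp, hpA⟩))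
    have hm : (A, B) ∈ S := by
      obtain ⟨x, hx, hx2⟩ := Finset.mem_image.mp (Finset.max'_mem _ hRne)
      obtain ⟨hxS, hx1⟩ := Finset.mem_filter.mp hx
      have : x = (A, B) := Prod.ext hx1 hx2
      rwa [this] at hxS
    set S' := S.erase (A, B) with hS'def
    have hS'sub : S' ⊆ S := Finset.erase_subset _ _
    have hJ' : JoinFree S' := joinFree_subset hS'sub hJ
    have hcard : S'.card + 1 = S.card := Finset.card_erase_add_one hm
    have hc' : S'.card ≤ N := by omega
    have hI'sub : S'.image Prod.fst ⊆ S.image Prod.fst := Finset.image_subset_image hS'sub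
    have hJ'sub : S'.image Prod.snd ⊆ S.image Prod.snd := Finset.image_subset_image hS'sub
    have hI'le : (S'.image Prod.fst).card ≤ (S.image Prod.fst).card := Finset.card_le_card hI'sub
    have hJ'le : (S'.image Prod.snd).card ≤ (S.image Prod.snd).card := Finset.card_le_card hJ'sub
    -- if the row of A has a second element, B is not a second coordinate in S'
    have hBout : (∃ p ∈ S, p.1 = A ∧ p.2 < B) → B ∉ S'.image Prod.snd := by
      rintro ⟨q, hq, hq1, hq2⟩ hBin
      obtain ⟨p, hp', hp2⟩ := Finset.mem_image.mp hBin
      have hpS : p ∈ S := hS'sub hp'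
      have hpne : p ≠ (A, B) := (Finset.mem_erase.mp hp').1
      have hp1 : p.1 < A := by
        rcases lt_or_eq_of_le (hub1 p hpS) with h | h
        · exact h
        · exact absurd (Prod.ext h hp2) hpne
      have := hJ p hpS q hq (by omega) (by omega)
      rw [hq1, hp2] at this
      exact this hm
    by_cases hrow : ∃ p ∈ S, p.1 = A ∧ p.2 < B
    · -- row has a second element; B disappears from S'
      have hBnot := hBout hrow
      have hBin : B ∈ S.image Prod.snd := Finset.mem_image_of_mem _ hm
      have hJ'lt : (S'.image Prod.snd).card < (S.image Prod.snd).card :=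
        Finset.card_lt_card ((Finset.ssubset_iff_of_subset hJ'sub).mpr ⟨B, hBin, hBnot⟩)
      have hS'ne : S'.Nonempty := by
        obtain ⟨q, hq, hq1, hq2⟩ := hrow
        exact ⟨q, Finset.mem_erase.mpr ⟨fun h => by simp [h] at hq2, hq⟩⟩
      obtain ⟨ihw, ihs⟩ := ih S' hc' hJ' hS'ne
      constructor
      · omega
      · intro a b ⟨pa, hpa, hpa1⟩ ⟨pb, hpb, hpb2⟩ hla hlb hab
        have haA : a ≠ A := by
          intro h
          apply hab
          have h1 : pb.1 = a := by have := hub1 pb hpb; have := hla pb hpb; omega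
          have : pb = (a, b) := Prod.ext h1 hpb2
          rwa [this] at hpb
        have hpa' : pa ∈ S' := Finset.mem_erase.mpr ⟨fun h => haA (by simp [h] at hpa1; omega), hpa⟩
        have hpb' : pb ∈ S' := by
          refine Finset.mem_erase.mpr ⟨fun h => ?_, hpb⟩
          obtain ⟨q, hq, hq1, hq2⟩ := hrow
          have : b ≤ q.2 := hlb q hq
          have : b = B := by rw [← hpb2, h]
          omega
        have := ihs a b ⟨pa, hpa', hpa1⟩ ⟨pb, hpb', hpb2⟩
          (fun p hp => hla p (hS'sub hp)) (fun p hp => hlb p (hS'sub hp))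
          (fun h => hab (hS'sub h))
        omega
    · -- row of A is just (A,B): A disappears from S'
      push_neg at hrow
      have hAnot : A ∉ S'.image Prod.fst := by
        intro hAin
        obtain ⟨p, hp', hp1⟩ := Finset.mem_image.mp hAin
        have hpS : p ∈ S := hS'sub hp'
        have hp2 : p.2 ≤ B := hub2 p hpS hp1
        have hp2' : ¬ p.2 < B := fun h => absurd (hrow p hpS hp1) (by omega)
        exact (Finset.mem_erase.mp hp').1 (Prod.ext hp1 (by omega))
      have hAin : A ∈ S.image Prod.fst := Finset.mem_image_of_mem _ hm
      have hI'lt : (S'.image Prod.fst).card < (S.image Prod.fst).card :=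
        Finset.card_lt_card ((Finset.ssubset_iff_of_subset hI'sub).mpr ⟨A, hAin, hAnot⟩)
      rcases Finset.eq_empty_or_nonempty S' with hS'e | hS'ne
      · -- S is the singleton {(A,B)}
        have hsing : ∀ x ∈ S, x = (A, B) := by
          intro x hx
          by_contra hxne
          have : x ∈ S' := Finset.mem_erase.mpr ⟨hxne, hx⟩
          simp [hS'e] at this
        have hcard1 : S.card = 1 := by
          rw [Finset.card_eq_one]
          exact ⟨(A, B), Finset.eq_singleton_iff_unique_mem.mpr ⟨hm, hsing⟩⟩
        constructor
        · have h1 : 1 ≤ (S.image Prod.fst).card := Finset.card_pos.mpr hneI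
          have h2 : 1 ≤ (S.image Prod.snd).card := Finset.card_pos.mpr (hne.image _)
          omega
        · intro a b ⟨pa, hpa, hpa1⟩ ⟨pb, hpb, hpb2⟩ hla hlb hab
          exfalso
          apply hab
          have h1 := hsing pa hpa
          have h2 := hsing pb hpb
          have : (a, b) = (A, B) := by
            rw [← hpa1, ← hpb2, h1, h2]
          rwa [this]
      · obtain ⟨ihw, ihs⟩ := ih S' hc' hJ' hS'ne
        constructor
        · omega
        · intro a b ⟨pa, hpa, hpa1⟩ ⟨pb, hpb, hpb2⟩ hla hlb hab
          have haA : a ≠ A := by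
            intro h
            apply hab
            have h1 : pb.1 = a := by have := hub1 pb hpb; have := hla pb hpb; omega
            have : pb = (a, b) := Prod.ext h1 hpb2
            rwa [this] at hpb
          have hpa' : pa ∈ S' := Finset.mem_erase.mpr ⟨fun h => haA (by simp [h] at hpa1; omega), hpa⟩
          by_cases hb' : ∃ p ∈ S', p.2 = b
          · have := ihs a b ⟨pa, hpa', hpa1⟩ hb'
              (fun p hp => hla p (hS'sub hp)) (fun p hp => hlb p (hS'sub hp))
              (fun h => hab (hS'sub h))
            omega
          · -- b only attained by (A,B): so b = B and b vanishes from S'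
            push_neg at hb'
            have hpbm : pb = (A, B) := by
              by_contra hne2
              exact hb' pb (Finset.mem_erase.mpr ⟨hne2, hpb⟩) hpb2
            have hbB : b = B := by rw [← hpb2, hpbm]
            have hBnot : B ∈ S'.image Prod.snd → False := by
              intro hBin
              obtain ⟨p, hp', hp2⟩ := Finset.mem_image.mp hBin
              exact hb' p hp' (by rw [hp2, hbB])
            have hBin : B ∈ S.image Prod.snd := Finset.mem_image_of_mem _ hm
            have hJ'lt : (S'.image Prod.snd).card < (S.image Prod.snd).card :=
              Finset.card_lt_card ((Finset.ssubset_iff_of_subset hJ'sub).mpr ⟨B, hBin, hBnot⟩)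
            omega

lemma pairs_bound (n : ℕ) (hn : 2 ≤ n) (S : Finset (ℕ × ℕ))
    (hS : S ⊆ Finset.Icc 1 n ×ˢ Finset.Icc 1 n) (h11 : (1, 1) ∉ S)
    (hJ : JoinFree S) : S.card ≤ 2 * n - 2 := by
  rcases Finset.eq_empty_or_nonempty S with he | hne
  · simp [he]
  have hmem : ∀ p ∈ S, 1 ≤ p.1 ∧ p.1 ≤ n ∧ 1 ≤ p.2 ∧ p.2 ≤ n := by
    intro p hp
    have := Finset.mem_product.mp (hS hp)
    simp only [Finset.mem_Icc] at this
    exact ⟨this.1.1, this.1.2, this.2.1, this.2.2⟩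
  have hIsub : S.image Prod.fst ⊆ Finset.Icc 1 n := by
    intro x hx
    obtain ⟨p, hp, hpx⟩ := Finset.mem_image.mp hx
    have := hmem p hp
    rw [Finset.mem_Icc]; omega
  have hJsub : S.image Prod.snd ⊆ Finset.Icc 1 n := by
    intro x hx
    obtain ⟨p, hp, hpx⟩ := Finset.mem_image.mp hx
    have := hmem p hp
    rw [Finset.mem_Icc]; omega
  have hIle : (S.image Prod.fst).card ≤ n := by
    simpa using Finset.card_le_card hIsub
  have hJle : (S.image Prod.snd).card ≤ n := by
    simpa using Finset.card_le_card hJsub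
  obtain ⟨kw, ks⟩ := key S.card S le_rfl hJ hne
  by_cases ha : ∃ p ∈ S, p.1 = 1
  · by_cases hb : ∃ p ∈ S, p.2 = 1
    · have := ks 1 1 ha hb (fun p hp => (hmem p hp).1) (fun p hp => (hmem p hp).2.2.1) h11
      omega
    · -- second coordinates are all ≥ 2
      push_neg at hb
      have : S.image Prod.snd ⊆ Finset.Icc 2 n := by
        intro x hx
        obtain ⟨p, hp, hpx⟩ := Finset.mem_image.mp hx
        have h1 := hmem p hp
        have h2 := hb p hp
        rw [Finset.mem_Icc]; omega
      have hJle2 : (S.image Prod.snd).card ≤ n - 1 := by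
        have := Finset.card_le_card this
        simpa using this
      omega
  · push_neg at ha
    have : S.image Prod.fst ⊆ Finset.Icc 2 n := by
      intro x hx
      obtain ⟨p, hp, hpx⟩ := Finset.mem_image.mp hx
      have h1 := hmem p hp
      have h2 := ha p hp
      rw [Finset.mem_Icc]; omega
    have hIle2 : (S.image Prod.fst).card ≤ n - 1 := by
      have := Finset.card_le_card this
      simpa using this
    omega

lemma gridSet_inj_s13 (n : ℕ) {i j k l : ℕ} (hi : 1 ≤ i) (hi' : i ≤ n) (hj : 1 ≤ j)
    (hk : 1 ≤ k) (hk' : k ≤ n) (hl : 1 ≤ l)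
    (h : gridSet n i j = gridSet n k l) : i = k ∧ j = l := by
  unfold gridSet at h
  have h1 : n + 1 - i ∈ Finset.Icc (n + 1 - k) (n + l) := by
    rw [← h, Finset.mem_Icc]; omega
  have h2 : n + 1 - k ∈ Finset.Icc (n + 1 - i) (n + j) := by
    rw [h, Finset.mem_Icc]; omega
  have h3 : n + j ∈ Finset.Icc (n + 1 - k) (n + l) := by
    rw [← h, Finset.mem_Icc]; omega
  have h4 : n + l ∈ Finset.Icc (n + 1 - i) (n + j) := by
    rw [h, Finset.mem_Icc]; omega
  rw [Finset.mem_Icc] at h1 h2 h3 h4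
  omega

/-- For `n ≥ 2`, every union-free subfamily of the Erdős–Shelah grid family with
`X_{11}` removed (a family of `n² - 1` sets) has size at most `2n - 2`. -/
theorem esgrid_erase_unionFree_le (n : ℕ) (hn : 2 ≤ n)
    (G : Finset (Finset ℕ)) (hG : G ⊆ (ESgrid n).erase (gridSet n 1 1))
    (h : UnionFree G) :
    G.card ≤ 2 * n - 2 := by
  set S : Finset (ℕ × ℕ) :=
    (Finset.Icc 1 n ×ˢ Finset.Icc 1 n).filter (fun p => gridSet n p.1 p.2 ∈ G) with hSdef
  have hSsub : S ⊆ Finset.Icc 1 n ×ˢ Finset.Icc 1 n := Finset.filter_subset _ _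
  have hmem : ∀ p ∈ S, 1 ≤ p.1 ∧ p.1 ≤ n ∧ 1 ≤ p.2 ∧ p.2 ≤ n := by
    intro p hp
    have := Finset.mem_product.mp (hSsub hp)
    simp only [Finset.mem_Icc] at this
    exact ⟨this.1.1, this.1.2, this.2.1, this.2.2⟩
  have hmemG : ∀ p ∈ S, gridSet n p.1 p.2 ∈ G := fun p hp => (Finset.mem_filter.mp hp).2
  -- G is the image of S
  have hGeq : G = S.image (fun p => gridSet n p.1 p.2) := by
    apply Finset.Subset.antisymm
    · intro X hX
      have hX' := hG hX
      have hXg : X ∈ ESgrid n := Finset.mem_of_mem_erase hX'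
      obtain ⟨p, hp, hpX⟩ := Finset.mem_image.mp hXg
      refine Finset.mem_image.mpr ⟨p, Finset.mem_filter.mpr ⟨hp, ?_⟩, hpX⟩
      rw [hpX]; exact hX
    · intro X hX
      obtain ⟨p, hp, hpX⟩ := Finset.mem_image.mp hX
      rw [← hpX]; exact hmemG p hp
  have hinj : ∀ p ∈ S, ∀ q ∈ S, gridSet n p.1 p.2 = gridSet n q.1 q.2 → p = q := by
    intro p hp q hq hpq
    have h1 := hmem p hp
    have h2 := hmem q hq
    obtain ⟨e1, e2⟩ := gridSet_inj_s13 n h1.1 h1.2.1 h1.2.2.1 h2.1 h2.2.1 h2.2.2.1 hpq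
    exact Prod.ext e1 e2
  have hcard : G.card = S.card := by
    rw [hGeq]
    exact Finset.card_image_of_injOn hinj
  have h11 : (1, 1) ∉ S := by
    intro hmem11
    have := hmemG _ hmem11
    have := hG this
    exact (Finset.mem_erase.mp this).1 rfl
  have hJF : JoinFree S := by
    intro p hp q hq h1 h2 hr
    have hp' := hmem p hp
    have hq' := hmem q hq
    have hXg := hmemG p hp
    have hYg := hmemG q hq
    have hZg := hmemG _ hr
    have hpq : p ≠ q := fun e => by rw [e] at h1; omega
    have hpr : p ≠ (q.1, p.2) := fun e => by rw [e] at h1; simp at h1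
    have hqr : q ≠ (q.1, p.2) := fun e => by
      have := congrArg Prod.snd e; simp at this; omega
    have hXY : gridSet n p.1 p.2 ≠ gridSet n q.1 q.2 :=
      fun e => hpq (hinj p hp q hq e)
    have hXZ : gridSet n p.1 p.2 ≠ gridSet n q.1 p.2 :=
      fun e => hpr (hinj p hp _ hr e)
    have hYZ : gridSet n q.1 q.2 ≠ gridSet n q.1 p.2 :=
      fun e => hqr (hinj q hq _ hr e)
    apply h _ hXg _ hYg _ hZg hXY hXZ hYZ
    unfold gridSet
    ext x
    simp only [Finset.mem_union, Finset.mem_Icc]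
    omega
  rw [hcard]
  exact pairs_bound n hn S hSsub h11 hJF
end

section
/- For every integer n ≥ 2, every union-free subfamily of the family {X_{ij} : 1 ≤ i ≤ n+1, 1 ≤ j ≤ n} \ {X_{11}} (which has n² + n − 1 sets) has size at most 2n − 1. -/
lemma grid_inj {n i j i' j' : ℕ} (hi : i ≤ n + 1) (hi' : i' ≤ n + 1)
    (hj : 1 ≤ j) (hj' : 1 ≤ j') (h : gridSet n i j = gridSet n i' j') :
    i = i' ∧ j = j' := by
  have h1 := Finset.ext_iff.mp h (n + 1 - i)
  have h2 := Finset.ext_iff.mp h (n + 1 - i')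
  have h3 := Finset.ext_iff.mp h (n + j)
  have h4 := Finset.ext_iff.mp h (n + j')
  simp [gridSet, Finset.mem_Icc] at h1 h2 h3 h4
  omega

lemma grid_union {n i j k l : ℕ} (hi : i ≤ n + 1) (hk : k ≤ n + 1)
    (hj : 1 ≤ j) (hl : 1 ≤ l) :
    gridSet n i j ∪ gridSet n k l = gridSet n (max i k) (max j l) := by
  ext x
  simp only [gridSet, Finset.mem_union, Finset.mem_Icc]
  omega

/-- Pure combinatorial core: a "join-free" set of grid points avoiding `(1,1)`
in the `(n+1) × n` grid has at most `2n - 1` points. -/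
lemma grid_count (n : ℕ) (hn : 2 ≤ n) (S : Finset (ℕ × ℕ))
    (hbox : ∀ p ∈ S, 1 ≤ p.1 ∧ p.1 ≤ n + 1 ∧ 1 ≤ p.2 ∧ p.2 ≤ n)
    (h11 : ((1, 1) : ℕ × ℕ) ∉ S)
    (hjf : ∀ p ∈ S, ∀ q ∈ S, ∀ r ∈ S,
      q.1 = p.1 → q.2 < p.2 → r.2 = p.2 → r.1 < p.1 → False) :
    S.card ≤ 2 * n - 1 := by
  rcases S.eq_empty_or_nonempty with hSe | hSne
  · simp [hSe]
  classical
  set R := S.filter (fun p => ∀ q ∈ S, q.1 = p.1 → p.2 ≤ q.2) with hR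
  set C := S.filter (fun p => ∀ q ∈ S, q.2 = p.2 → p.1 ≤ q.1) with hC
  -- every point is in R ∪ C
  have hRC : S ⊆ R ∪ C := by
    intro p hp
    rw [Finset.mem_union]
    by_contra hcon
    push_neg at hcon
    obtain ⟨hpR, hpC⟩ := hcon
    rw [hR, Finset.mem_filter] at hpR
    rw [hC, Finset.mem_filter] at hpC
    push_neg at hpR hpC
    obtain ⟨q, hq, hq1, hq2⟩ := hpR hp
    obtain ⟨r, hr, hr1, hr2⟩ := hpC hp
    exact hjf p hp q hq r hr hq1 (by omega) hr1 (by omega)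
  -- below every point of S there is a point of R ∩ C
  have hmin : ∀ p ∈ S, ∃ m ∈ R ∩ C, m.1 ≤ p.1 ∧ m.2 ≤ p.2 := by
    intro p hp
    set T := S.filter (fun s => s.1 ≤ p.1 ∧ s.2 ≤ p.2) with hT
    have hpt : p ∈ T := by simp [hT, hp]
    obtain ⟨m, hmT, hmmin⟩ := T.exists_min_image (fun s => s.1 + s.2) ⟨p, hpt⟩
    rw [hT, Finset.mem_filter] at hmT
    obtain ⟨hmS, hm1, hm2⟩ := hmT
    refine ⟨m, ?_, hm1, hm2⟩
    rw [Finset.mem_inter, hR, hC, Finset.mem_filter, Finset.mem_filter]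
    refine ⟨⟨hmS, ?_⟩, hmS, ?_⟩
    · intro q hq hq1
      by_contra hlt
      push_neg at hlt
      have hqT : q ∈ T := by
        rw [hT, Finset.mem_filter]; exact ⟨hq, by omega, by omega⟩
      have := hmmin q hqT
      omega
    · intro q hq hq2
      by_contra hlt
      push_neg at hlt
      have hqT : q ∈ T := by
        rw [hT, Finset.mem_filter]; exact ⟨hq, by omega, by omega⟩
      have := hmmin q hqT
      omega
  -- cards of R and C via injectivity of first / second projections
  have hRinj : Set.InjOn Prod.fst (R : Set (ℕ × ℕ)) := by
    intro p hp q hq hpq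
    simp only [Finset.coe_filter, Set.mem_setOf_eq, hR] at hp hq
    have h1 := hp.2 q hq.1 (by omega)
    have h2 := hq.2 p hp.1 (by omega)
    exact Prod.ext hpq (by omega)
  have hCinj : Set.InjOn Prod.snd (C : Set (ℕ × ℕ)) := by
    intro p hp q hq hpq
    simp only [Finset.coe_filter, Set.mem_setOf_eq, hC] at hp hq
    have h1 := hp.2 q hq.1 (by omega)
    have h2 := hq.2 p hp.1 (by omega)
    exact Prod.ext (by omega) hpq
  have hRcard : R.card = (R.image Prod.fst).card :=
    (Finset.card_image_of_injOn hRinj).symm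
  have hCcard : C.card = (C.image Prod.snd).card :=
    (Finset.card_image_of_injOn hCinj).symm
  have hCle : C.card ≤ n := by
    rw [hCcard]
    have : C.image Prod.snd ⊆ Finset.Icc 1 n := by
      intro j hj
      rw [Finset.mem_image] at hj
      obtain ⟨p, hp, hpj⟩ := hj
      rw [hC, Finset.mem_filter] at hp
      have := hbox p hp.1
      rw [Finset.mem_Icc]; omega
    calc (C.image Prod.snd).card ≤ (Finset.Icc 1 n).card := Finset.card_le_card this
      _ = n := by rw [Nat.card_Icc]; omega
  have hcu := Finset.card_union_add_card_inter R C
  have hScard : S.card ≤ (R ∪ C).card := Finset.card_le_card hRC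
  by_cases hrow1 : ∃ p ∈ S, p.1 = 1
  · by_cases hcol1 : ∃ p ∈ S, p.2 = 1
    · -- two distinct minimal points
      obtain ⟨p, hp, hp1⟩ := hrow1
      obtain ⟨q, hq, hq1⟩ := hcol1
      obtain ⟨m1, hm1, hm1a, hm1b⟩ := hmin p hp
      obtain ⟨m2, hm2, hm2a, hm2b⟩ := hmin q hq
      have hm1S : m1 ∈ S := by
        rw [Finset.mem_inter, hR, Finset.mem_filter] at hm1; exact hm1.1.1
      have hm2S : m2 ∈ S := by
        rw [Finset.mem_inter, hR, Finset.mem_filter] at hm2; exact hm2.1.1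
      have hb1 := hbox m1 hm1S
      have hb2 := hbox m2 hm2S
      have hne1 : m1 ≠ (1, 1) := fun hh => h11 (hh ▸ hm1S)
      have hne2 : m2 ≠ (1, 1) := fun hh => h11 (hh ▸ hm2S)
      have hm1e : m1.1 = 1 := by omega
      have hm2e : m2.2 = 1 := by omega
      have hm12 : m1 ≠ m2 := by
        intro hh
        apply hne1
        have : m1.2 = 1 := by rw [hh]; exact hm2e
        exact Prod.ext hm1e this
      have hsub : ({m1, m2} : Finset (ℕ × ℕ)) ⊆ R ∩ C := by
        intro x hx
        rw [Finset.mem_insert, Finset.mem_singleton] at hx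
        rcases hx with rfl | rfl
        · exact hm1
        · exact hm2
      have h2le : 2 ≤ (R ∩ C).card := by
        calc 2 = ({m1, m2} : Finset (ℕ × ℕ)).card := (Finset.card_pair hm12).symm
          _ ≤ (R ∩ C).card := Finset.card_le_card hsub
      have hRle : R.card ≤ n + 1 := by
        rw [hRcard]
        have : R.image Prod.fst ⊆ Finset.Icc 1 (n + 1) := by
          intro i hi
          rw [Finset.mem_image] at hi
          obtain ⟨p', hp', hpi⟩ := hi
          rw [hR, Finset.mem_filter] at hp'
          have := hbox p' hp'.1
          rw [Finset.mem_Icc]; omega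
        calc (R.image Prod.fst).card ≤ (Finset.Icc 1 (n + 1)).card :=
              Finset.card_le_card this
          _ = n + 1 := by rw [Nat.card_Icc]; omega
      omega
    · -- every point has second coordinate ≥ 2, so C is small
      push_neg at hcol1
      obtain ⟨p, hp⟩ := hSne
      obtain ⟨m, hm, _, _⟩ := hmin p hp
      have h1le : 1 ≤ (R ∩ C).card := Finset.card_pos.mpr ⟨m, hm⟩
      have hCle' : C.card ≤ n - 1 := by
        rw [hCcard]
        have : C.image Prod.snd ⊆ Finset.Icc 2 n := by
          intro j hj
          rw [Finset.mem_image] at hj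
          obtain ⟨p', hp', hpj⟩ := hj
          rw [hC, Finset.mem_filter] at hp'
          have hb := hbox p' hp'.1
          have := hcol1 p' hp'.1
          rw [Finset.mem_Icc]; omega
        calc (C.image Prod.snd).card ≤ (Finset.Icc 2 n).card :=
              Finset.card_le_card this
          _ = n - 1 := by rw [Nat.card_Icc]; omega
      have hRle : R.card ≤ n + 1 := by
        rw [hRcard]
        have : R.image Prod.fst ⊆ Finset.Icc 1 (n + 1) := by
          intro i hi
          rw [Finset.mem_image] at hi
          obtain ⟨p', hp', hpi⟩ := hi
          rw [hR, Finset.mem_filter] at hp'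
          have := hbox p' hp'.1
          rw [Finset.mem_Icc]; omega
        calc (R.image Prod.fst).card ≤ (Finset.Icc 1 (n + 1)).card :=
              Finset.card_le_card this
          _ = n + 1 := by rw [Nat.card_Icc]; omega
      omega
  · -- every point has first coordinate ≥ 2, so R is small
    push_neg at hrow1
    obtain ⟨p, hp⟩ := hSne
    obtain ⟨m, hm, _, _⟩ := hmin p hp
    have h1le : 1 ≤ (R ∩ C).card := Finset.card_pos.mpr ⟨m, hm⟩
    have hRle : R.card ≤ n := by
      rw [hRcard]
      have : R.image Prod.fst ⊆ Finset.Icc 2 (n + 1) := by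
        intro i hi
        rw [Finset.mem_image] at hi
        obtain ⟨p', hp', hpi⟩ := hi
        rw [hR, Finset.mem_filter] at hp'
        have hb := hbox p' hp'.1
        have := hrow1 p' hp'.1
        rw [Finset.mem_Icc]; omega
      calc (R.image Prod.fst).card ≤ (Finset.Icc 2 (n + 1)).card :=
            Finset.card_le_card this
        _ = n := by rw [Nat.card_Icc]; omega
    omega

/-- For `n ≥ 2`, every union-free subfamily of the extended grid family with
`X_{11}` removed (a family of `n² + n - 1` sets) has size at most `2n - 1`. -/
theorem esgridExt_erase_unionFree_le (n : ℕ) (hn : 2 ≤ n)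
    (G : Finset (Finset ℕ)) (hG : G ⊆ (ESgridExt n).erase (gridSet n 1 1))
    (h : UnionFree G) :
    G.card ≤ 2 * n - 1 := by
  classical
  set S := ((Finset.Icc 1 (n + 1)) ×ˢ (Finset.Icc 1 n)).filter
    (fun p => gridSet n p.1 p.2 ∈ G) with hS
  have hbox : ∀ p ∈ S, 1 ≤ p.1 ∧ p.1 ≤ n + 1 ∧ 1 ≤ p.2 ∧ p.2 ≤ n := by
    intro p hp
    rw [hS, Finset.mem_filter, Finset.mem_product, Finset.mem_Icc, Finset.mem_Icc] at hp
    omega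
  have hSG : ∀ p ∈ S, gridSet n p.1 p.2 ∈ G := by
    intro p hp
    rw [hS, Finset.mem_filter] at hp
    exact hp.2
  -- G is the image of S
  have himg : G = S.image (fun p => gridSet n p.1 p.2) := by
    ext X
    constructor
    · intro hX
      have hX' := hG hX
      rw [Finset.mem_erase] at hX'
      obtain ⟨hne, hmem⟩ := hX'
      rw [ESgridExt, Finset.mem_image] at hmem
      obtain ⟨p, hp, hpe⟩ := hmem
      rw [Finset.mem_image]
      refine ⟨p, ?_, hpe⟩
      rw [hS, Finset.mem_filter]
      exact ⟨hp, hpe ▸ hX⟩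
    · intro hX
      rw [Finset.mem_image] at hX
      obtain ⟨p, hp, hpe⟩ := hX
      exact hpe ▸ hSG p hp
  have hinj : Set.InjOn (fun p : ℕ × ℕ => gridSet n p.1 p.2) (S : Set (ℕ × ℕ)) := by
    intro p hp q hq hpq
    have hbp := hbox p (by exact_mod_cast hp)
    have hbq := hbox q (by exact_mod_cast hq)
    have := grid_inj (n := n) (by omega) (by omega) (by omega) (by omega) hpq
    exact Prod.ext this.1 this.2
  have hcards : G.card = S.card := by
    rw [himg, Finset.card_image_of_injOn hinj]
  rw [hcards]
  apply grid_count n hn S hbox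
  · intro hc
    have := hSG _ hc
    have := hG this
    rw [Finset.mem_erase] at this
    exact this.1 rfl
  · intro p hp q hq r hr hq1 hq2 hr2 hr1
    have hbp := hbox p hp
    have hbq := hbox q hq
    have hbr := hbox r hr
    have hXY : gridSet n q.1 q.2 ∪ gridSet n r.1 r.2 = gridSet n p.1 p.2 := by
      rw [grid_union (by omega) (by omega) (by omega) (by omega)]
      congr 1 <;> omega
    have hqr : gridSet n q.1 q.2 ≠ gridSet n r.1 r.2 := by
      intro he
      have := grid_inj (n := n) (by omega) (by omega) (by omega) (by omega) he
      omega
    have hqp : gridSet n q.1 q.2 ≠ gridSet n p.1 p.2 := by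
      intro he
      have := grid_inj (n := n) (by omega) (by omega) (by omega) (by omega) he
      omega
    have hrp : gridSet n r.1 r.2 ≠ gridSet n p.1 p.2 := by
      intro he
      have := grid_inj (n := n) (by omega) (by omega) (by omega) (by omega) he
      omega
    exact h _ (hSG q hq) _ (hSG r hr) _ (hSG p hp) hqr hqp hrp hXY
end
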